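/- arXiv:math/0107192 — 7 statements merged into one kernel-verified Lean document; each statement's English description precedes it below -/
import Mathlib

section
/- If a finite collection of ℓ lines in the real plane is in general position apart from prescribed multiplicities, and there exists an intersection point of multiplicity ℓ - c, then Σ_k n_k · C(k-1, 2) ≤ C(c,2) + C(ℓ-c,2), where n_k is the number of intersection points of multiplicity k. -/
open scoped Classical

/-- A line in the real plane. -/
def IsLine (l : Set (ℝ × ℝ)) : Prop :=
  ∃ a b c : ℝ, (a, b) ≠ (0, 0) ∧ l = {p : ℝ × ℝ | a * p.1 + b * p.2 = c}

/-- The multiplicity of a point with respect to a finite collection of lines. -/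
noncomputable def multiplicity' (L : Finset (Set (ℝ × ℝ))) (p : ℝ × ℝ) : ℕ :=
  (L.filter fun l => p ∈ l).card

/-!
Let `B` be the set of lines missing `P`; it has at most `c` elements. A point `p ≠ P` lies on
at most one line through `P`, so at least `mult p - 1` of its lines are in `B`, and hence `p`
accounts for at least `C(mult p - 1, 2)` pairs of lines of `B`. Two lines meet at most once,
so distinct points account for distinct pairs, and all points other than `P` together
contribute at most `C(c, 2)`. The point `P` itself contributes `C(ℓ - c - 1, 2) ≤ C(ℓ - c, 2)`.
-/

open Finset

def lineThrough (p q : ℝ × ℝ) : Set (ℝ × ℝ) :=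
  {x | (x.1 - p.1) * (q.2 - p.2) = (x.2 - p.2) * (q.1 - p.1)}

theorem IsLine.eq_lineThrough {l : Set (ℝ × ℝ)} (hl : IsLine l) {p q : ℝ × ℝ} (hpq : p ≠ q)
    (hp : p ∈ l) (hq : q ∈ l) : l = lineThrough p q := by
  obtain ⟨a, b, c, hab, rfl⟩ := hl
  have hab : a ≠ 0 ∨ b ≠ 0 := by rwa [Ne, Prod.mk.injEq, not_and_or] at hab
  have hpq : q.1 - p.1 ≠ 0 ∨ q.2 - p.2 ≠ 0 := by
    rw [Ne, Prod.ext_iff, not_and_or] at hpq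
    exact hpq.imp (fun h => sub_ne_zero.2 (Ne.symm h)) (fun h => sub_ne_zero.2 (Ne.symm h))
  simp only [Set.mem_ofPred_eq] at hp hq
  have hv : a * (q.1 - p.1) + b * (q.2 - p.2) = 0 := by linarith
  ext x
  simp only [lineThrough, Set.mem_ofPred_eq]
  constructor
  · intro hx
    have hu : a * (x.1 - p.1) + b * (x.2 - p.2) = 0 := by linarith
    rcases hab with ha | hb
    · exact mul_left_cancel₀ ha (by linear_combination (q.2 - p.2) * hu - (x.2 - p.2) * hv)
    · exact mul_left_cancel₀ hb (by linear_combination (x.1 - p.1) * hv - (q.1 - p.1) * hu)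
  · intro hx
    have hu : a * (x.1 - p.1) + b * (x.2 - p.2) = 0 := by
      rcases hpq with h1 | h2
      · exact mul_left_cancel₀ h1 (by linear_combination (x.1 - p.1) * hv - b * hx)
      · exact mul_left_cancel₀ h2 (by linear_combination (x.2 - p.2) * hv + a * hx)
    linarith

theorem IsLine.inter_subsingleton {l m : Set (ℝ × ℝ)} (hl : IsLine l) (hm : IsLine m)
    (hlm : l ≠ m) : (l ∩ m).Subsingleton := by
  intro p hp q hq
  by_contra hpq
  exact hlm ((hl.eq_lineThrough hpq hp.1 hq.1).trans (hm.eq_lineThrough hpq hp.2 hq.2).symm)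

theorem sum_card_filter_eq_mul_le_sum {ι : Type*} (s : Finset ι) (f : ι → ℕ) (t : Finset ℕ)
    (g : ℕ → ℕ) : ∑ k ∈ t, #{i ∈ s | f i = k} * g k ≤ ∑ i ∈ s, g (f i) :=
  calc ∑ k ∈ t, #{i ∈ s | f i = k} * g k
      = ∑ k ∈ t, ∑ i ∈ s with f i = k, g (f i) := by
        refine sum_congr rfl fun k _ => ?_
        rw [sum_congr rfl fun i hi => by rw [(mem_filter.1 hi).2], sum_const, smul_eq_mul]
    _ ≤ ∑ i ∈ s, g (f i) := sum_fiberwise_le_sum_of_sum_fiber_nonneg fun _ _ => Nat.zero_le _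

section IncidenceCounting

variable {α : Type*} {L : Finset (Set α)}
  (hL : (L : Set (Set α)).Pairwise fun l m => (l ∩ m).Subsingleton)
include hL

theorem card_filter_mem_and_mem_le_one {p q : α} (hpq : p ≠ q) :
    #{l ∈ L | p ∈ l ∧ q ∈ l} ≤ 1 := by
  refine card_le_one.2 fun l hl m hm => ?_
  rw [mem_filter] at hl hm
  by_contra hlm
  exact hpq (hL hl.1 hm.1 hlm ⟨hl.2.1, hm.2.1⟩ ⟨hl.2.2, hm.2.2⟩)

theorem card_filter_mem_le_card_filter_not_mem_add_one {p q : α} (hpq : p ≠ q) :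
    #{l ∈ L | p ∈ l} ≤ #{l ∈ {l ∈ L | q ∉ l} | p ∈ l} + 1 := by
  have hsplit := card_filter_add_card_filter_not (s := {l ∈ L | p ∈ l}) (fun l => q ∈ l)
  simp only [filter_filter] at hsplit
  rw [filter_comm, filter_filter]
  have := card_filter_mem_and_mem_le_one hL hpq
  omega

theorem sum_choose_card_filter_mem_le (S : Finset α) :
    ∑ p ∈ S, (#{l ∈ L | p ∈ l}).choose 2 ≤ (#L).choose 2 := by
  have hdisj : (S : Set α).PairwiseDisjoint fun p => powersetCard 2 {l ∈ L | p ∈ l} := by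
    intro p _ q _ hpq
    refine disjoint_left.2 fun s hsp hsq => ?_
    rw [mem_powersetCard] at hsp hsq
    obtain ⟨l, m, hlm, rfl⟩ := card_eq_two.1 hsp.2
    have hl := mem_filter.1 (hsp.1 (mem_insert_self l {m}))
    have hm := mem_filter.1 (hsp.1 (mem_insert_of_mem (mem_singleton_self m)))
    exact hpq (hL hl.1 hm.1 hlm ⟨hl.2, hm.2⟩
      ⟨(mem_filter.1 (hsq.1 (mem_insert_self l {m}))).2,
        (mem_filter.1 (hsq.1 (mem_insert_of_mem (mem_singleton_self m)))).2⟩)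
  calc ∑ p ∈ S, (#{l ∈ L | p ∈ l}).choose 2
      = #(S.biUnion fun p => powersetCard 2 {l ∈ L | p ∈ l}) := by
        simp only [card_biUnion hdisj, card_powersetCard]
    _ ≤ #(powersetCard 2 L) :=
        card_le_card (biUnion_subset.2 fun _ _ => powersetCard_mono (filter_subset _ _))
    _ = (#L).choose 2 := card_powersetCard 2 L

theorem sum_choose_card_filter_mem_sub_one_le (S : Finset α) (P : α) :
    ∑ p ∈ S, (#{l ∈ L | p ∈ l} - 1).choose 2
      ≤ (#{l ∈ L | P ∈ l} - 1).choose 2 + (#{l ∈ L | P ∉ l}).choose 2 := by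
  have hB : (({l ∈ L | P ∉ l} : Finset (Set α)) : Set (Set α)).Pairwise
      fun l m => (l ∩ m).Subsingleton := hL.mono (coe_subset.2 (filter_subset _ _))
  calc ∑ p ∈ S, (#{l ∈ L | p ∈ l} - 1).choose 2
      ≤ ∑ p ∈ insert P (S.erase P), (#{l ∈ L | p ∈ l} - 1).choose 2 :=
        sum_le_sum_of_subset (insert_erase_subset P S)
    _ = (#{l ∈ L | P ∈ l} - 1).choose 2 + ∑ p ∈ S.erase P, (#{l ∈ L | p ∈ l} - 1).choose 2 :=
        sum_insert (notMem_erase P S)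
    _ ≤ (#{l ∈ L | P ∈ l} - 1).choose 2
          + ∑ p ∈ S.erase P, (#{l ∈ {l ∈ L | P ∉ l} | p ∈ l}).choose 2 := by
        gcongr with p hp
        have := card_filter_mem_le_card_filter_not_mem_add_one hL (ne_of_mem_erase hp)
        omega
    _ ≤ (#{l ∈ L | P ∈ l} - 1).choose 2 + (#{l ∈ L | P ∉ l}).choose 2 := by
        gcongr
        exact sum_choose_card_filter_mem_le hB _

end IncidenceCounting

theorem largepoint_general (L : Finset (Set (ℝ × ℝ))) (hL : ∀ l ∈ L, IsLine l)
    (ℓ c : ℕ) (hcard : L.card = ℓ)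
    (P : ℝ × ℝ) (hP : multiplicity' L P = ℓ - c)
    (Pts : Finset (ℝ × ℝ)) :
    ∑ k ∈ Finset.Icc 2 ℓ,
        (Pts.filter fun p => multiplicity' L p = k).card * Nat.choose (k - 1) 2
      ≤ Nat.choose c 2 + Nat.choose (ℓ - c) 2 := by
  have hlines : (L : Set (Set (ℝ × ℝ))).Pairwise fun l m => (l ∩ m).Subsingleton :=
    fun l hl m hm hlm => (hL l hl).inter_subsingleton (hL m hm) hlm
  have hoff : #{l ∈ L | P ∉ l} ≤ c := by
    have := card_filter_add_card_filter_not (s := L) (fun l => P ∈ l)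
    rw [multiplicity'] at hP
    omega
  calc _ ≤ ∑ p ∈ Pts, (multiplicity' L p - 1).choose 2 :=
        sum_card_filter_eq_mul_le_sum Pts (multiplicity' L) _ fun k => (k - 1).choose 2
    _ ≤ (multiplicity' L P - 1).choose 2 + (#{l ∈ L | P ∉ l}).choose 2 :=
        sum_choose_card_filter_mem_sub_one_le hlines Pts P
    _ ≤ (ℓ - c).choose 2 + c.choose 2 :=
        add_le_add (Nat.choose_le_choose 2 (hP ▸ Nat.sub_le _ _)) (Nat.choose_le_choose 2 hoff)
    _ = c.choose 2 + (ℓ - c).choose 2 := add_comm _ _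

/-- For an arrangement of `ℓ` real lines with an intersection point `P`
of multiplicity `ℓ - c`, one has `Σ_k n_k · C(k-1, 2) ≤ C(c,2) + C(ℓ-c,2)`, where
`n_k` is the number of intersection points of multiplicity `k`. -/
theorem largepoint (L : Finset (Set (ℝ × ℝ))) (hL : ∀ l ∈ L, IsLine l)
    (ℓ c : ℕ) (hcard : L.card = ℓ) (hc : c ≤ ℓ)
    (P : ℝ × ℝ) (hP : multiplicity' L P = ℓ - c)
    (Pts : Finset (ℝ × ℝ))
    (hPts : ∀ p, p ∈ Pts ↔ 2 ≤ multiplicity' L p) :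
    ∑ k ∈ Finset.Icc 2 ℓ,
        (Pts.filter fun p => multiplicity' L p = k).card * Nat.choose (k - 1) 2
      ≤ Nat.choose c 2 + Nat.choose (ℓ - c) 2 :=
  largepoint_general L hL ℓ c hcard P hP Pts
end

section
/- There is no arrangement of lines in the affine (or real projective) plane realizing the Fano configuration: 7 lines and 7 points such that every point lies on exactly 3 of the lines, every line contains exactly 3 of the points, and every two lines meet in one of the 7 points (signature [3^7] for 7 lines). -/
/-!
A realization of the Fano configuration contains a complete quadrangle whose three diagonal points
are collinear: take a line `l`, a point `q` off it, the three lines through `q` meeting `l` in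
`p 0, p 1, p 2`, and their third points `r 0, r 1, r 2`; counting shows that `r i, r j, p k` are
collinear whenever `{i, j, k} = {0, 1, 2}`. In the real plane this is impossible: an affine change
of coordinates sends `r 0, r 1, r 2` to `(0, 0), (1, 0), (0, 1)` and `q` to some `(b, c)`, and then
the diagonal points are collinear only if `2 b c (1 - b - c) = 0`, i.e. only if three vertices of
the quadrangle are collinear.
-/

open scoped Classical

open Finset

def Col (A B C : ℝ × ℝ) : Prop :=
  (B.1 - A.1) * (C.2 - A.2) - (B.2 - A.2) * (C.1 - A.1) = 0

theorem eq_zero_of_mul_eq_zero_of_mul_eq_zero {u v x : ℝ} (huv : (u, v) ≠ (0, 0))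
    (hu : u * x = 0) (hv : v * x = 0) : x = 0 := by
  by_contra hx
  exact huv (by simp [(mul_eq_zero.1 hu).resolve_right hx, (mul_eq_zero.1 hv).resolve_right hx])

namespace IsLine

variable {l l' : Set (ℝ × ℝ)} {A B C : ℝ × ℝ}

theorem col (hl : IsLine l) (hA : A ∈ l) (hB : B ∈ l) (hC : C ∈ l) : Col A B C := by
  obtain ⟨a, b, c, hab, rfl⟩ := hl
  simp only [Set.mem_ofPred_eq] at hA hB hC
  refine eq_zero_of_mul_eq_zero_of_mul_eq_zero hab ?_ ?_
  · linear_combination (C.2 - A.2) * hB - (B.2 - A.2) * hC + (B.2 - C.2) * hA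
  · linear_combination (C.1 - B.1) * hA + (A.1 - C.1) * hB + (B.1 - A.1) * hC

theorem mem_of_col (hl : IsLine l) (hA : A ∈ l) (hB : B ∈ l) (hAB : A ≠ B) (h : Col A B C) :
    C ∈ l := by
  obtain ⟨a, b, c, -, rfl⟩ := hl
  unfold Col at h
  simp only [Set.mem_ofPred_eq] at hA hB ⊢
  have hBA : (B.1 - A.1, B.2 - A.2) ≠ (0, 0) := by
    simpa [Prod.ext_iff, sub_eq_zero, eq_comm] using hAB
  have := eq_zero_of_mul_eq_zero_of_mul_eq_zero (x := a * C.1 + b * C.2 - c) hBA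
    (by linear_combination b * h + (C.1 - A.1) * hB - (C.1 - A.1) * hA + (B.1 - A.1) * hA)
    (by linear_combination -a * h + (C.2 - A.2) * hB - (C.2 - A.2) * hA + (B.2 - A.2) * hA)
  linarith

theorem eq_of_mem (hl : IsLine l) (hl' : IsLine l') (hA : A ∈ l) (hA' : A ∈ l')
    (hB : B ∈ l) (hB' : B ∈ l') (hAB : A ≠ B) : l = l' :=
  Set.ext fun _ => ⟨fun hC => hl'.mem_of_col hA' hB' hAB (hl.col hA hB hC),
    fun hC => hl.mem_of_col hA hB hAB (hl'.col hA' hB' hC)⟩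

end IsLine

theorem exists_affine_frame_of_not_col {r₁ r₂ r₃ : ℝ × ℝ} (h : ¬Col r₁ r₂ r₃) :
    ∃ φ : ℝ × ℝ → ℝ × ℝ, Function.Surjective φ ∧
      (∀ x y z, Col (φ x) (φ y) (φ z) ↔ Col x y z) ∧
      φ (0, 0) = r₁ ∧ φ (1, 0) = r₂ ∧ φ (0, 1) = r₃ := by
  set e := r₂ - r₁
  set f := r₃ - r₁
  have hD : e.1 * f.2 - e.2 * f.1 ≠ 0 := h
  refine ⟨fun x => r₁ + x.1 • e + x.2 • f, fun p => ?_, fun x y z => ?_, by simp, by simp [e],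
    by simp [f]⟩
  · refine ⟨(((p - r₁).1 * f.2 - (p - r₁).2 * f.1) / (e.1 * f.2 - e.2 * f.1),
      (e.1 * (p - r₁).2 - e.2 * (p - r₁).1) / (e.1 * f.2 - e.2 * f.1)), ?_⟩
    ext <;> dsimp <;> rw [div_mul_eq_mul_div, div_mul_eq_mul_div, add_assoc, ← add_div,
      ← eq_sub_iff_add_eq', div_eq_iff hD] <;> ring
  · unfold Col
    simp only [Prod.fst_add, Prod.snd_add, Prod.smul_fst, Prod.smul_snd, smul_eq_mul]
    constructor
    · intro hc
      exact (mul_eq_zero.1 (by linear_combination hc)).resolve_right hD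
    · intro hc
      linear_combination (e.1 * f.2 - e.2 * f.1) * hc

theorem not_col_diagonal_points_standard {q p₁ p₂ p₃ : ℝ × ℝ}
    (hq₁ : ¬Col (1, 0) (0, 1) q) (hq₂ : ¬Col (0, 1) (0, 0) q) (hq₃ : ¬Col (0, 0) (1, 0) q)
    (h₁ : Col (0, 0) p₁ q) (h₂ : Col (1, 0) p₂ q) (h₃ : Col (0, 1) p₃ q)
    (h₁' : Col (1, 0) (0, 1) p₁) (h₂' : Col (0, 1) (0, 0) p₂) (h₃' : Col (0, 0) (1, 0) p₃) :
    ¬Col p₁ p₂ p₃ := by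
  obtain ⟨b, c⟩ := q
  obtain ⟨x₁, y₁⟩ := p₁
  obtain ⟨x₂, y₂⟩ := p₂
  obtain ⟨x₃, y₃⟩ := p₃
  unfold Col at *
  obtain rfl : x₂ = 0 := by linear_combination h₂'
  obtain rfl : y₃ = 0 := by linear_combination h₃'
  have hb : b ≠ 0 := by contrapose! hq₂; linear_combination hq₂
  have hc : c ≠ 0 := by contrapose! hq₃; linear_combination hq₃
  have hbc : 1 - (b + c) ≠ 0 := by contrapose! hq₁; linear_combination hq₁
  have hx₁ : x₁ * (b + c) = b := by linear_combination h₁ - b * h₁'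
  have hy₁ : y₁ * (b + c) = c := by linear_combination -h₁ - c * h₁'
  have hy₂ : y₂ * (1 - b) = c := by linear_combination h₂
  have hx₃ : x₃ * (1 - c) = b := by linear_combination -h₃
  intro hC
  -- `p₁ = (b, c) / (b + c)`, `p₂ = (0, c / (1 - b))`, `p₃ = (b / (1 - c), 0)`, and clearing these
  -- denominators in `hC` leaves the following; the factor `2` is where the characteristic enters.
  have : 2 * b * c * (1 - (b + c)) = 0 := by
    linear_combination (b + c) * (1 - b) * (1 - c) * hC
      + ((b + c) * (x₃ * (1 - c)) - (1 - c) * (x₁ * (b + c))) * hy₂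
      + ((b + c) * c - (1 - b) * c) * hx₃ - (1 - c) * c * hx₁ - (1 - b) * (x₃ * (1 - c)) * hy₁
  simp [hb, hc, hbc] at this

theorem not_col_diagonal_points {q r₁ r₂ r₃ p₁ p₂ p₃ : ℝ × ℝ} (hr : ¬Col r₁ r₂ r₃)
    (hq₁ : ¬Col r₂ r₃ q) (hq₂ : ¬Col r₃ r₁ q) (hq₃ : ¬Col r₁ r₂ q)
    (h₁ : Col r₁ p₁ q) (h₂ : Col r₂ p₂ q) (h₃ : Col r₃ p₃ q)
    (h₁' : Col r₂ r₃ p₁) (h₂' : Col r₃ r₁ p₂) (h₃' : Col r₁ r₂ p₃) : ¬Col p₁ p₂ p₃ := by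
  obtain ⟨φ, hφ, hcol, rfl, rfl, rfl⟩ := exists_affine_frame_of_not_col hr
  obtain ⟨q, rfl⟩ := hφ q
  obtain ⟨p₁, rfl⟩ := hφ p₁
  obtain ⟨p₂, rfl⟩ := hφ p₂
  obtain ⟨p₃, rfl⟩ := hφ p₃
  simp only [hcol] at *
  exact not_col_diagonal_points_standard hq₁ hq₂ hq₃ h₁ h₂ h₃ h₁' h₂' h₃'

theorem Finset.eq_or_eq_or_eq_of_card_eq_three {α : Type*} {s : Finset α} {a b c x : α}
    (hs : #s = 3) (ha : a ∈ s) (hb : b ∈ s) (hc : c ∈ s) (hab : a ≠ b) (hac : a ≠ c)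
    (hbc : b ≠ c) (hx : x ∈ s) : x = a ∨ x = b ∨ x = c := by
  by_contra! h
  have := three_lt_card.2 ⟨a, ha, b, hb, c, hc, x, hx, hab, hac, h.1.symm, hbc, h.2.1.symm,
    h.2.2.symm⟩
  omega

theorem Finset.exists_mem_ne_ne_of_card_eq_three {α : Type*} [DecidableEq α] {s : Finset α}
    {a : α} (hs : #s = 3) (ha : a ∈ s) (b : α) : ∃ c ∈ s, c ≠ a ∧ c ≠ b := by
  obtain ⟨c, hc, hcb⟩ := (s.erase a).exists_mem_ne (by rw [card_erase_of_mem ha, hs]; norm_num) b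
  exact ⟨c, mem_of_mem_erase hc, ne_of_mem_erase hc, hcb⟩

structure FanoArrangement where
  lines : Finset (Set (ℝ × ℝ))
  points : Finset (ℝ × ℝ)
  card_points : #points = 7
  isLine : ∀ l ∈ lines, IsLine l
  card_lines_through : ∀ p ∈ points, #(lines.filter (p ∈ ·)) = 3
  card_points_on : ∀ l ∈ lines, #(points.filter (· ∈ l)) = 3
  exists_mem_inter : ∀ l₁ ∈ lines, ∀ l₂ ∈ lines, l₁ ≠ l₂ → ∃ p ∈ points, p ∈ l₁ ∧ p ∈ l₂

namespace FanoArrangement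

variable (F : FanoArrangement)

/-- The three lines through a point are pairwise disjoint away from it and carry two further points
each, so they cover all seven points. -/
theorem exists_line_through {a b : ℝ × ℝ} (ha : a ∈ F.points) (hb : b ∈ F.points) (hab : a ≠ b) :
    ∃ m ∈ F.lines, a ∈ m ∧ b ∈ m := by
  set T := F.lines.filter (a ∈ ·)
  set S : Set (ℝ × ℝ) → Finset (ℝ × ℝ) := fun m => (F.points.filter (· ∈ m)).erase a
  have hdisj : (T : Set (Set (ℝ × ℝ))).PairwiseDisjoint S := by
    intro m hm m' hm' hne
    refine Finset.disjoint_left.2 fun x hx hx' => hne ?_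
    simp only [S, T, coe_filter, Set.mem_ofPred_eq, mem_erase, mem_filter] at hm hm' hx hx'
    exact (F.isLine m hm.1).eq_of_mem (F.isLine m' hm'.1) hm.2 hm'.2 hx.2.2 hx'.2.2 hx.1.symm
  have hsub : T.biUnion S ⊆ F.points.erase a := by
    intro x hx
    simp only [S, mem_biUnion, mem_erase, mem_filter] at hx
    obtain ⟨_, _, hxa, hxP, _⟩ := hx
    exact mem_erase.2 ⟨hxa, hxP⟩
  have hcard : #(F.points.erase a) ≤ #(T.biUnion S) := by
    rw [card_biUnion hdisj, sum_const_nat (m := 2) fun m hm => ?_, card_erase_of_mem ha,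
      F.card_points, F.card_lines_through a ha]
    rw [mem_filter] at hm
    rw [card_erase_of_mem (mem_filter.2 ⟨ha, hm.2⟩), F.card_points_on m hm.1]
  obtain ⟨m, hm, hbm⟩ :=
    mem_biUnion.1 ((eq_of_subset_of_card_le hsub hcard) ▸ mem_erase.2 ⟨hab.symm, hb⟩)
  exact ⟨m, (mem_filter.1 hm).1, (mem_filter.1 hm).2, (mem_filter.1 (mem_of_mem_erase hbm)).2⟩

structure Pencil where
  l : Set (ℝ × ℝ)
  q : ℝ × ℝ
  g : Fin 3 → Set (ℝ × ℝ)
  p : Fin 3 → ℝ × ℝ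
  r : Fin 3 → ℝ × ℝ
  l_mem : l ∈ F.lines
  q_mem : q ∈ F.points
  q_not_mem_l : q ∉ l
  g_mem : ∀ i, g i ∈ F.lines
  g_injective : Function.Injective g
  q_mem_g : ∀ i, q ∈ g i
  p_mem : ∀ i, p i ∈ F.points
  p_mem_l : ∀ i, p i ∈ l
  p_mem_g : ∀ i, p i ∈ g i
  r_mem : ∀ i, r i ∈ F.points
  r_mem_g : ∀ i, r i ∈ g i
  r_ne_q : ∀ i, r i ≠ q
  r_ne_p : ∀ i, r i ≠ p i

theorem nonempty_pencil : Nonempty F.Pencil := by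
  obtain ⟨a, ha⟩ : F.points.Nonempty := card_pos.1 (by rw [F.card_points]; norm_num)
  obtain ⟨l, hl⟩ : (F.lines.filter (a ∈ ·)).Nonempty :=
    card_pos.1 (by rw [F.card_lines_through a ha]; norm_num)
  have hlL := (mem_filter.1 hl).1
  obtain ⟨q, hq, hql⟩ : ∃ q ∈ F.points, q ∉ l := by
    by_contra! h
    have := F.card_points_on l hlL
    rw [filter_true_of_mem h, F.card_points] at this
    omega
  let e := (F.lines.filter (q ∈ ·)).equivFinOfCardEq (F.card_lines_through q hq)
  have hg : ∀ i, (e.symm i).1 ∈ F.lines ∧ q ∈ (e.symm i).1 := fun i => mem_filter.1 (e.symm i).2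
  choose p hp using fun i => F.exists_mem_inter _ (hg i).1 l hlL fun h => hql (h ▸ (hg i).2)
  choose r hr using fun i => exists_mem_ne_ne_of_card_eq_three (F.card_points_on _ (hg i).1)
    (mem_filter.2 ⟨hq, (hg i).2⟩) (p i)
  exact ⟨{
    l, q, p, r
    g := fun i => (e.symm i).1
    l_mem := hlL
    q_mem := hq
    q_not_mem_l := hql
    g_mem := fun i => (hg i).1
    g_injective := Subtype.val_injective.comp e.symm.injective
    q_mem_g := fun i => (hg i).2
    p_mem := fun i => (hp i).1
    p_mem_l := fun i => (hp i).2.2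
    p_mem_g := fun i => (hp i).2.1
    r_mem := fun i => (mem_filter.1 (hr i).1).1
    r_mem_g := fun i => (mem_filter.1 (hr i).1).2
    r_ne_q := fun i => (hr i).2.1
    r_ne_p := fun i => (hr i).2.2 }⟩

namespace Pencil

variable {F} (c : F.Pencil) {m : Set (ℝ × ℝ)} {i j k : Fin 3}

theorem eq_of_r_mem_g (h : c.r i ∈ c.g k) : i = k :=
  c.g_injective ((F.isLine _ (c.g_mem i)).eq_of_mem (F.isLine _ (c.g_mem k)) (c.q_mem_g i)
    (c.q_mem_g k) (c.r_mem_g i) h (c.r_ne_q i).symm)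

theorem r_injective : Function.Injective c.r :=
  fun _ j h => c.eq_of_r_mem_g (h ▸ c.r_mem_g j)

theorem r_not_mem_l (i : Fin 3) : c.r i ∉ c.l := fun h =>
  c.q_not_mem_l <| ((F.isLine _ c.l_mem).eq_of_mem (F.isLine _ (c.g_mem i)) (c.p_mem_l i)
    (c.p_mem_g i) h (c.r_mem_g i) (c.r_ne_p i).symm) ▸ c.q_mem_g i

theorem q_not_mem_of_r_mem (hm : IsLine m) (hi : c.r i ∈ m) (hj : c.r j ∈ m) (hij : i ≠ j) :
    c.q ∉ m := fun hq =>
  hij (c.eq_of_r_mem_g ((hm.eq_of_mem (F.isLine _ (c.g_mem i)) hq (c.q_mem_g i) hi (c.r_mem_g i)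
    (c.r_ne_q i).symm) ▸ hj)).symm

/-- Otherwise the point where `m` meets `l` would be a fourth point of `F` on `m`. -/
theorem r_not_mem_of_r_mem (hm : m ∈ F.lines) (hi : c.r i ∈ m) (hj : c.r j ∈ m) (hij : i ≠ j)
    (hki : k ≠ i) (hkj : k ≠ j) : c.r k ∉ m := by
  intro hk
  have hml : m ≠ c.l := fun h => c.r_not_mem_l i (h ▸ hi)
  obtain ⟨z, hz, hzm, hzl⟩ := F.exists_mem_inter m hm c.l c.l_mem hml
  have mem (t : Fin 3) (ht : c.r t ∈ m) : c.r t ∈ F.points.filter (· ∈ m) :=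
    mem_filter.2 ⟨c.r_mem t, ht⟩
  rcases eq_or_eq_or_eq_of_card_eq_three (F.card_points_on m hm) (mem i hi) (mem j hj) (mem k hk)
    (c.r_injective.ne hij) (c.r_injective.ne hki.symm) (c.r_injective.ne hkj.symm)
    (mem_filter.2 ⟨hz, hzm⟩) with rfl | rfl | rfl
  exacts [c.r_not_mem_l i hzl, c.r_not_mem_l j hzl, c.r_not_mem_l k hzl]

/-- `m` meets `g k` in a point of `F`, which is neither `q` nor `r k`. -/
theorem p_mem_of_r_mem (hm : m ∈ F.lines) (hi : c.r i ∈ m) (hj : c.r j ∈ m) (hij : i ≠ j)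
    (hki : k ≠ i) (hkj : k ≠ j) : c.p k ∈ m := by
  have hmg : m ≠ c.g k := fun h => hki (c.eq_of_r_mem_g (h ▸ hi)).symm
  obtain ⟨x, hx, hxm, hxg⟩ := F.exists_mem_inter m hm (c.g k) (c.g_mem k) hmg
  rcases eq_or_eq_or_eq_of_card_eq_three (F.card_points_on _ (c.g_mem k))
    (mem_filter.2 ⟨c.q_mem, c.q_mem_g k⟩) (mem_filter.2 ⟨c.p_mem k, c.p_mem_g k⟩)
    (mem_filter.2 ⟨c.r_mem k, c.r_mem_g k⟩) (fun h => c.q_not_mem_l (h ▸ c.p_mem_l k))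
    (c.r_ne_q k).symm (c.r_ne_p k).symm (mem_filter.2 ⟨hx, hxg⟩) with rfl | rfl | rfl
  · exact absurd hxm (c.q_not_mem_of_r_mem (F.isLine m hm) hi hj hij)
  · exact hxm
  · exact absurd hxm (c.r_not_mem_of_r_mem hm hi hj hij hki hkj)

theorem col_r_r_p (hij : i ≠ j) (hki : k ≠ i) (hkj : k ≠ j) : Col (c.r i) (c.r j) (c.p k) := by
  obtain ⟨m, hm, hi, hj⟩ := F.exists_line_through (c.r_mem i) (c.r_mem j) (c.r_injective.ne hij)
  exact (F.isLine m hm).col hi hj (c.p_mem_of_r_mem hm hi hj hij hki hkj)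

theorem not_col_r_r_q (hij : i ≠ j) : ¬Col (c.r i) (c.r j) c.q := by
  obtain ⟨m, hm, hi, hj⟩ := F.exists_line_through (c.r_mem i) (c.r_mem j) (c.r_injective.ne hij)
  exact fun h => c.q_not_mem_of_r_mem (F.isLine m hm) hi hj hij
    ((F.isLine m hm).mem_of_col hi hj (c.r_injective.ne hij) h)

theorem not_col_r (hij : i ≠ j) (hki : k ≠ i) (hkj : k ≠ j) : ¬Col (c.r i) (c.r j) (c.r k) := by
  obtain ⟨m, hm, hi, hj⟩ := F.exists_line_through (c.r_mem i) (c.r_mem j) (c.r_injective.ne hij)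
  exact fun h => c.r_not_mem_of_r_mem hm hi hj hij hki hkj
    ((F.isLine m hm).mem_of_col hi hj (c.r_injective.ne hij) h)

theorem col_r_p_q (i : Fin 3) : Col (c.r i) (c.p i) c.q :=
  (F.isLine _ (c.g_mem i)).col (c.r_mem_g i) (c.p_mem_g i) (c.q_mem_g i)

theorem col_p : Col (c.p 0) (c.p 1) (c.p 2) :=
  (F.isLine _ c.l_mem).col (c.p_mem_l 0) (c.p_mem_l 1) (c.p_mem_l 2)

/-- The quadrangle `q, r 0, r 1, r 2` has the collinear diagonal points `p 0, p 1, p 2`. -/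
theorem false (c : F.Pencil) : False :=
  not_col_diagonal_points (c.not_col_r (by decide) (by decide) (by decide))
    (c.not_col_r_r_q (by decide)) (c.not_col_r_r_q (by decide)) (c.not_col_r_r_q (by decide))
    (c.col_r_p_q 0) (c.col_r_p_q 1) (c.col_r_p_q 2)
    (c.col_r_r_p (by decide) (by decide) (by decide))
    (c.col_r_r_p (by decide) (by decide) (by decide))
    (c.col_r_r_p (by decide) (by decide) (by decide)) c.col_p

end Pencil

end FanoArrangement

/-- The Fano configuration is not realizable by straight lines in the
real plane: there are no 7 lines and 7 points such that every point lies on exactly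
3 of the lines, every line contains exactly 3 of the points, and every two distinct
lines meet in one of the 7 points (signature `[3^7]`). -/
theorem no_fano_line_arrangement :
    ¬ ∃ (L : Finset (Set (ℝ × ℝ))) (P : Finset (ℝ × ℝ)),
      L.card = 7 ∧ P.card = 7 ∧ (∀ l ∈ L, IsLine l) ∧
      (∀ p ∈ P, (L.filter fun l => p ∈ l).card = 3) ∧
      (∀ l ∈ L, (P.filter fun p => p ∈ l).card = 3) ∧
      (∀ l₁ ∈ L, ∀ l₂ ∈ L, l₁ ≠ l₂ → ∃ p ∈ P, p ∈ l₁ ∧ p ∈ l₂) := by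
  rintro ⟨L, P, -, hP, hline, hdeg, hsize, hmeet⟩
  obtain ⟨c⟩ := FanoArrangement.nonempty_pencil ⟨L, P, hP, hline, hdeg, hsize, hmeet⟩
  exact c.false
end

section
/- View the Lefschetz pair [a,b] (with 1 ≤ a ≤ b ≤ ℓ) as the permutation of {1,…,ℓ} sending each x with a ≤ x ≤ b to a+b−x and fixing all other indices. A list of Lefschetz pairs ([a₁,b₁],…,[a_p,b_p]) determines a wiring diagram in which every two wires intersect exactly once if and only if the composite permutation [a_p,b_p]∘⋯∘[a₁,b₁] equals the order-reversing permutation J : x ↦ ℓ+1−x, and the total crossing count Σᵢ C(bᵢ−aᵢ+1, 2) equals C(ℓ,2). -/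
/-- The block-reversal (Lefschetz pair) permutation `[a,b]`:
`x ↦ a + b - x` for `a ≤ x ≤ b`, identity elsewhere. -/
def lefschetzRev (a b x : ℕ) : ℕ := if a ≤ x ∧ x ≤ b then a + b - x else x

/-- Apply a list of Lefschetz pairs, first pair first. -/
def applyLefschetzList (ps : List (ℕ × ℕ)) (x : ℕ) : ℕ :=
  ps.foldl (fun y pr => lefschetzRev pr.1 pr.2 y) x

/-- Wires `j` and `j'` cross at event `i` of the list `ps`: just before event `i`,
the positions of both wires lie in the reversed block `[aᵢ, bᵢ]`. -/
def crossAt (ps : List (ℕ × ℕ)) (i : Fin ps.length) (j j' : ℕ) : Prop :=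
  (ps.get i).1 ≤ applyLefschetzList (ps.take i) j ∧
    applyLefschetzList (ps.take i) j ≤ (ps.get i).2 ∧
    (ps.get i).1 ≤ applyLefschetzList (ps.take i) j' ∧
    applyLefschetzList (ps.take i) j' ≤ (ps.get i).2

/-! An event reverses the relative order of exactly those pairs of wires that lie in its block,
so a pair of wires ends up inverted iff it crosses an odd number of times. The composite of the
events is a permutation of `{1,…,ℓ}`, and the only order-reversing one is `J`. Event `i` is a
crossing for `C(bᵢ-aᵢ+1, 2)` pairs, so the crossing numbers of the `C(ℓ,2)` pairs sum to
`Σᵢ C(bᵢ-aᵢ+1, 2)`; hence all of them equal `1` iff all are odd and their sum is `C(ℓ,2)`. -/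

open Finset

theorem forall_eq_one_iff_odd_and_sum_eq_card {ι : Type*} (s : Finset ι) (f : ι → ℕ) :
    (∀ i ∈ s, f i = 1) ↔ (∀ i ∈ s, Odd (f i)) ∧ ∑ i ∈ s, f i = #s := by
  constructor
  · intro h
    exact ⟨fun i hi => h i hi ▸ odd_one, by simp [sum_congr rfl h]⟩
  · rintro ⟨hodd, hsum⟩ i hi
    have hpos : ∀ i ∈ s, 1 ≤ f i := fun i hi => (hodd i hi).pos
    exact ((sum_eq_sum_iff_of_le hpos).1 (by simpa using hsum.symm) i hi).symm

theorem eq_add_sub_of_strictAntiOn {g : ℕ → ℕ} {m n j : ℕ} (hg : StrictAntiOn g (Set.Icc m n))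
    (hmaps : Set.MapsTo g (Set.Icc m n) (Set.Icc m n)) (hj : j ∈ Set.Icc m n) :
    g j = m + n - j := by
  have hgj := hmaps hj
  simp only [Set.mem_Icc] at hj hgj
  have hupper : #(Icc j n) ≤ #(Icc m (g j)) := by
    refine card_le_card_of_injOn g (fun x hx => ?_) (hg.injOn.mono fun x hx => ?_)
    · simp only [coe_Icc, Set.mem_Icc] at hx ⊢
      exact ⟨(hmaps ⟨by omega, hx.2⟩).1, hg.antitoneOn ⟨by omega, by omega⟩ ⟨by omega, hx.2⟩ hx.1⟩
    · simp only [coe_Icc, Set.mem_Icc] at hx ⊢; omega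
  have hlower : #(Icc m j) ≤ #(Icc (g j) n) := by
    refine card_le_card_of_injOn g (fun x hx => ?_) (hg.injOn.mono fun x hx => ?_)
    · simp only [coe_Icc, Set.mem_Icc] at hx ⊢
      exact ⟨hg.antitoneOn ⟨hx.1, by omega⟩ ⟨by omega, by omega⟩ hx.2, (hmaps ⟨hx.1, by omega⟩).2⟩
    · simp only [coe_Icc, Set.mem_Icc] at hx ⊢; omega
  simp only [Nat.card_Icc] at hupper hlower
  omega

section lefschetzRev

variable {a b m n x x' : ℕ}

theorem lefschetzRev_involutive : Function.Involutive (lefschetzRev a b) := by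
  intro x; unfold lefschetzRev; split_ifs <;> omega

theorem lefschetzRev_mapsTo (ha : m ≤ a) (hb : b ≤ n) :
    Set.MapsTo (lefschetzRev a b) (Set.Icc m n) (Set.Icc m n) := by
  intro x hx; simp only [Set.mem_Icc, lefschetzRev] at hx ⊢; split_ifs <;> omega

theorem lefschetzRev_lt_lefschetzRev_iff (h : x ≠ x') :
    lefschetzRev a b x < lefschetzRev a b x' ↔
      (x < x' ↔ ¬(a ≤ x ∧ x ≤ b ∧ a ≤ x' ∧ x' ≤ b)) := by
  unfold lefschetzRev; split_ifs <;> omega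

end lefschetzRev

section applyLefschetzList

variable {ps : List (ℕ × ℕ)} {ℓ m n : ℕ}

@[simp] theorem applyLefschetzList_cons (pr : ℕ × ℕ) (ps : List (ℕ × ℕ)) (x : ℕ) :
    applyLefschetzList (pr :: ps) x = applyLefschetzList ps (lefschetzRev pr.1 pr.2 x) := rfl

theorem applyLefschetzList_injective (ps : List (ℕ × ℕ)) :
    Function.Injective (applyLefschetzList ps) := by
  induction ps with
  | nil => exact Function.injective_id
  | cons pr ps ih => exact ih.comp lefschetzRev_involutive.injective

theorem applyLefschetzList_mapsTo (hps : ∀ pr ∈ ps, m ≤ pr.1 ∧ pr.2 ≤ n) :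
    Set.MapsTo (applyLefschetzList ps) (Set.Icc m n) (Set.Icc m n) := by
  induction ps with
  | nil => exact Set.mapsTo_id _
  | cons pr ps ih =>
    obtain ⟨ha, hb⟩ := hps pr List.mem_cons_self
    exact (ih fun q hq => hps q (List.mem_cons_of_mem _ hq)).comp (lefschetzRev_mapsTo ha hb)

theorem image_applyLefschetzList_Icc (hps : ∀ pr ∈ ps, m ≤ pr.1 ∧ pr.2 ≤ n) :
    (Icc m n).image (applyLefschetzList ps) = Icc m n :=
  eq_of_subset_of_card_le
    (image_subset_iff.2 fun x hx => by
      simpa using applyLefschetzList_mapsTo hps (by simpa using hx))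
    (card_image_of_injective _ (applyLefschetzList_injective ps)).ge

theorem card_filter_applyLefschetzList_mem (hps : ∀ pr ∈ ps, m ≤ pr.1 ∧ pr.2 ≤ n)
    {s : Finset ℕ} (hs : s ⊆ Icc m n) :
    #{x ∈ Icc m n | applyLefschetzList ps x ∈ s} = #s := by
  rw [← card_image_of_injective _ (applyLefschetzList_injective ps),
    ← filter_image (p := (· ∈ s)), image_applyLefschetzList_Icc hps, filter_mem_eq_inter,
    inter_eq_right.2 hs]

theorem applyLefschetzList_eq_reverse_iff (hps : ∀ pr ∈ ps, 1 ≤ pr.1 ∧ pr.2 ≤ ℓ) :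
    (∀ j, 1 ≤ j → j ≤ ℓ → applyLefschetzList ps j = ℓ + 1 - j) ↔
      StrictAntiOn (applyLefschetzList ps) (Set.Icc 1 ℓ) := by
  constructor
  · rintro hrev x ⟨hx1, hx2⟩ x' ⟨hx1', hx2'⟩ h
    rw [hrev x hx1 hx2, hrev x' hx1' hx2']
    omega
  · intro hanti j hj1 hj2
    rw [eq_add_sub_of_strictAntiOn hanti (applyLefschetzList_mapsTo hps) ⟨hj1, hj2⟩]
    omega

end applyLefschetzList

instance decidableCrossAt (ps : List (ℕ × ℕ)) (i : Fin ps.length) (j j' : ℕ) :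
    Decidable (crossAt ps i j j') := by
  unfold crossAt; infer_instance

def crossCount (ps : List (ℕ × ℕ)) (j j' : ℕ) : ℕ := #{i | crossAt ps i j j'}

def wirePairs (ℓ : ℕ) : Finset (ℕ × ℕ) := {p ∈ Icc 1 ℓ ×ˢ Icc 1 ℓ | p.1 < p.2}

section crossCount

variable {ps : List (ℕ × ℕ)} {ℓ : ℕ}

theorem crossAt_cons_zero (pr : ℕ × ℕ) (ps : List (ℕ × ℕ)) (j j' : ℕ) :
    crossAt (pr :: ps) 0 j j' ↔ pr.1 ≤ j ∧ j ≤ pr.2 ∧ pr.1 ≤ j' ∧ j' ≤ pr.2 := by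
  simp [crossAt, applyLefschetzList]

theorem crossAt_cons_succ (pr : ℕ × ℕ) (ps : List (ℕ × ℕ)) (i : Fin ps.length) (j j' : ℕ) :
    crossAt (pr :: ps) i.succ j j' ↔
      crossAt ps i (lefschetzRev pr.1 pr.2 j) (lefschetzRev pr.1 pr.2 j') := by
  simp [crossAt]

theorem crossCount_cons (pr : ℕ × ℕ) (ps : List (ℕ × ℕ)) (j j' : ℕ) :
    crossCount (pr :: ps) j j' =
      (if pr.1 ≤ j ∧ j ≤ pr.2 ∧ pr.1 ≤ j' ∧ j' ≤ pr.2 then 1 else 0) +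
        crossCount ps (lefschetzRev pr.1 pr.2 j) (lefschetzRev pr.1 pr.2 j') := by
  simp only [crossCount, card_filter]
  exact (Fin.sum_univ_succ (n := ps.length) _).trans
    (by simp only [crossAt_cons_zero, crossAt_cons_succ])

theorem existsUnique_crossAt_iff (ps : List (ℕ × ℕ)) (j j' : ℕ) :
    (∃! i, crossAt ps i j j') ↔ crossCount ps j j' = 1 :=
  Fintype.existsUnique_iff_card_one _

theorem applyLefschetzList_lt_iff_iff_even (ps : List (ℕ × ℕ)) {x x' : ℕ} (h : x ≠ x') :
    (applyLefschetzList ps x < applyLefschetzList ps x' ↔ x < x') ↔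
      Even (crossCount ps x x') := by
  induction ps generalizing x x' with
  | nil => simp [crossCount, applyLefschetzList]
  | cons pr ps ih =>
    have hr := (lefschetzRev_involutive (a := pr.1) (b := pr.2)).injective.ne h
    have hrev := lefschetzRev_lt_lefschetzRev_iff (a := pr.1) (b := pr.2) h
    rw [applyLefschetzList_cons, applyLefschetzList_cons, crossCount_cons]
    split_ifs with hblock
    · rw [add_comm, Nat.even_add_one, ← ih hr]
      tauto
    · rw [zero_add, ← ih hr]
      tauto

theorem applyLefschetzList_lt_iff_odd (ps : List (ℕ × ℕ)) {x x' : ℕ} (h : x < x') :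
    applyLefschetzList ps x' < applyLefschetzList ps x ↔ Odd (crossCount ps x x') := by
  have hne := (applyLefschetzList_injective ps).ne h.ne
  rw [← Nat.not_even_iff_odd, ← applyLefschetzList_lt_iff_iff_even ps h.ne, iff_true_right h]
  omega

theorem mem_wirePairs {p : ℕ × ℕ} : p ∈ wirePairs ℓ ↔ 1 ≤ p.1 ∧ p.1 < p.2 ∧ p.2 ≤ ℓ := by
  simp only [wirePairs, mem_filter, mem_product, mem_Icc]
  omega

theorem card_wirePairs : #(wirePairs ℓ) = ℓ.choose 2 := by
  simp [wirePairs, card_product_filter_lt]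

theorem strictAntiOn_applyLefschetzList_iff :
    StrictAntiOn (applyLefschetzList ps) (Set.Icc 1 ℓ) ↔
      ∀ p ∈ wirePairs ℓ, Odd (crossCount ps p.1 p.2) := by
  constructor
  · intro hanti p hp
    rw [mem_wirePairs] at hp
    exact (applyLefschetzList_lt_iff_odd ps hp.2.1).1
      (hanti ⟨hp.1, by omega⟩ ⟨by omega, hp.2.2⟩ hp.2.1)
  · intro hodd x hx x' hx' h
    exact (applyLefschetzList_lt_iff_odd ps h).2 (hodd (x, x') (mem_wirePairs.2 ⟨hx.1, h, hx'.2⟩))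

theorem card_filter_crossAt (hps : ∀ pr ∈ ps, 1 ≤ pr.1 ∧ pr.1 ≤ pr.2 ∧ pr.2 ≤ ℓ)
    (i : Fin ps.length) :
    #{p ∈ wirePairs ℓ | crossAt ps i p.1 p.2} = ((ps.get i).2 - (ps.get i).1 + 1).choose 2 := by
  obtain ⟨ha, hab, hb⟩ := hps _ (ps.get_mem i)
  set T := {x ∈ Icc 1 ℓ | applyLefschetzList (ps.take i) x ∈ Icc (ps.get i).1 (ps.get i).2}
  have hcross : {p ∈ wirePairs ℓ | crossAt ps i p.1 p.2} = {p ∈ T ×ˢ T | p.1 < p.2} := by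
    ext p
    simp only [wirePairs, T, mem_filter, mem_product, mem_Icc]
    unfold crossAt
    tauto
  have htake : ∀ pr ∈ ps.take i, 1 ≤ pr.1 ∧ pr.2 ≤ ℓ := fun pr hpr =>
    ⟨(hps pr (List.mem_of_mem_take hpr)).1, (hps pr (List.mem_of_mem_take hpr)).2.2⟩
  have hT : #T = (ps.get i).2 - (ps.get i).1 + 1 := by
    rw [card_filter_applyLefschetzList_mem htake (Icc_subset_Icc ha hb), Nat.card_Icc]
    omega
  rw [hcross, card_product_filter_lt, hT]

theorem sum_crossCount_wirePairs (hps : ∀ pr ∈ ps, 1 ≤ pr.1 ∧ pr.1 ≤ pr.2 ∧ pr.2 ≤ ℓ) :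
    ∑ p ∈ wirePairs ℓ, crossCount ps p.1 p.2 =
      (ps.map fun pr => (pr.2 - pr.1 + 1).choose 2).sum := by
  simp only [crossCount, card_filter]
  rw [sum_comm]
  simp only [← card_filter, card_filter_crossAt hps]
  exact Fin.sum_univ_fun_getElem ps fun pr => (pr.2 - pr.1 + 1).choose 2

end crossCount

/-- A list of Lefschetz pairs `([a₁,b₁],…,[a_p,b_p])` (with
`1 ≤ aᵢ ≤ bᵢ ≤ ℓ`) determines a wiring diagram in which every two wires intersect
exactly once if and only if the composite permutation `[a_p,b_p]∘⋯∘[a₁,b₁]` equals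
the order-reversing permutation `J : x ↦ ℓ+1−x` on `{1,…,ℓ}`, and the total
crossing count `Σᵢ C(bᵢ−aᵢ+1, 2)` equals `C(ℓ,2)`. -/
theorem wiring_unique_intersection_iff (ℓ : ℕ) (ps : List (ℕ × ℕ))
    (hps : ∀ pr ∈ ps, 1 ≤ pr.1 ∧ pr.1 ≤ pr.2 ∧ pr.2 ≤ ℓ) :
    (∀ j j', 1 ≤ j → j < j' → j' ≤ ℓ → ∃! i : Fin ps.length, crossAt ps i j j')
      ↔ ((∀ j, 1 ≤ j → j ≤ ℓ → applyLefschetzList ps j = ℓ + 1 - j) ∧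
        (ps.map fun pr => Nat.choose (pr.2 - pr.1 + 1) 2).sum = Nat.choose ℓ 2) := by
  have hblocks : ∀ pr ∈ ps, 1 ≤ pr.1 ∧ pr.2 ≤ ℓ := fun pr h => ⟨(hps pr h).1, (hps pr h).2.2⟩
  calc (∀ j j', 1 ≤ j → j < j' → j' ≤ ℓ → ∃! i : Fin ps.length, crossAt ps i j j')
      ↔ ∀ p ∈ wirePairs ℓ, crossCount ps p.1 p.2 = 1 := by
        simp only [existsUnique_crossAt_iff, Prod.forall, mem_wirePairs, and_imp]
    _ ↔ (∀ p ∈ wirePairs ℓ, Odd (crossCount ps p.1 p.2)) ∧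
          ∑ p ∈ wirePairs ℓ, crossCount ps p.1 p.2 = #(wirePairs ℓ) :=
        forall_eq_one_iff_odd_and_sum_eq_card _ _
    _ ↔ _ := by
        rw [← strictAntiOn_applyLefschetzList_iff, ← applyLefschetzList_eq_reverse_iff hblocks,
          sum_crossCount_wirePairs hps, card_wirePairs]
end

section
/- For 1 ≤ i ≤ t ≤ ℓ and any shift c with c+t ≤ ℓ, the products of block-reversal permutations corresponding to the lists T↑ = ([c+i,c+i+1], …, [c+t−1,c+t], [c,c+t−1], [c+t−1,c+t], …, [c+t−i,c+t−i+1]) and T↓ = ([c+i−1,c+i], …, [c,c+1], [c+1,c+t], [c,c+1], …, [c+t−1−i,c+t−i]) are equal as permutations of {1,…,ℓ}. -/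
/-- The list `T↑` = `([c+i,c+i+1], …, [c+t−1,c+t], [c,c+t−1], [c+t−1,c+t], …, [c+t−i,c+t−i+1])`. -/
def lefschetzUp (c i t : ℕ) : List (ℕ × ℕ) :=
  ((List.range (t - i)).map fun j => (c + i + j, c + i + j + 1))
    ++ [(c, c + t - 1)]
    ++ ((List.range i).map fun j => (c + t - 1 - j, c + t - j))

/-- The list `T↓` = `([c+i−1,c+i], …, [c,c+1], [c+1,c+t], [c,c+1], …, [c+t−1−i,c+t−i])`. -/
def lefschetzDown (c i t : ℕ) : List (ℕ × ℕ) :=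
  ((List.range i).map fun j => (c + i - 1 - j, c + i - j))
    ++ [(c + 1, c + t)]
    ++ ((List.range (t - i)).map fun j => (c + j, c + j + 1))

lemma applyLefschetzList_append (l1 l2 : List (ℕ × ℕ)) (x : ℕ) :
    applyLefschetzList (l1 ++ l2) x = applyLefschetzList l2 (applyLefschetzList l1 x) :=
  List.foldl_append ..

lemma asc_apply (a n x : ℕ) :
    applyLefschetzList ((List.range n).map fun j => (a + j, a + j + 1)) x =
      if x = a ∧ 0 < n then a + n
      else if a < x ∧ x ≤ a + n then x - 1 else x := by
  induction n with
  | zero =>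
    simp only [List.range_zero, List.map_nil, applyLefschetzList, List.foldl_nil]
    split_ifs <;> omega
  | succ n ih =>
    rw [List.range_succ, List.map_append, applyLefschetzList_append, ih]
    simp only [List.map_cons, List.map_nil, applyLefschetzList, List.foldl_cons,
      List.foldl_nil, lefschetzRev]
    split_ifs <;> omega

lemma desc_apply (m n : ℕ) (h : n ≤ m) (x : ℕ) :
    applyLefschetzList ((List.range n).map fun j => (m - 1 - j, m - j)) x =
      if x = m ∧ 0 < n then m - n
      else if m - n ≤ x ∧ x < m then x + 1 else x := by
  induction n with
  | zero =>
    simp only [List.range_zero, List.map_nil, applyLefschetzList, List.foldl_nil]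
    split_ifs <;> omega
  | succ n ih =>
    rw [List.range_succ, List.map_append, applyLefschetzList_append,
      ih (Nat.le_of_succ_le h)]
    simp only [List.map_cons, List.map_nil, applyLefschetzList, List.foldl_cons,
      List.foldl_nil, lefschetzRev]
    split_ifs <;> omega

set_option maxHeartbeats 1000000 in
/-- For `1 ≤ i ≤ t ≤ ℓ` and any shift `c ≥ 1` with `c + t ≤ ℓ`,
the products of the block-reversal permutations corresponding to the lists `T↑`
and `T↓` (composed left to right, first pair applied first) are equal as
permutations of `{1,…,ℓ}`. -/
theorem lefschetzUp_eq_lefschetzDown (ℓ c i t : ℕ)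
    (hi : 1 ≤ i) (hit : i ≤ t) (htl : t ≤ ℓ) (hc : 1 ≤ c) (hct : c + t ≤ ℓ) :
    ∀ x, applyLefschetzList (lefschetzUp c i t) x
        = applyLefschetzList (lefschetzDown c i t) x := by
  intro x
  rw [lefschetzUp, lefschetzDown, applyLefschetzList_append, applyLefschetzList_append,
    applyLefschetzList_append, applyLefschetzList_append,
    asc_apply, asc_apply, desc_apply (c + t) i (by omega),
    desc_apply (c + i) i (by omega)]
  simp only [applyLefschetzList, List.foldl_cons, List.foldl_nil, lefschetzRev]
  split_ifs <;> omega
end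

section
/- For an arrangement of at most 5 lines in the real plane with every two lines meeting, the signature (multiset of intersection-point multiplicities) determines the incidence lattice up to isomorphism. -/
open scoped Classical

lemma mem_line_iff_collinear {a b c : ℝ} (hab : (a, b) ≠ ((0 : ℝ), (0 : ℝ))) {p q : ℝ × ℝ}
    (hp : a * p.1 + b * p.2 = c) (hq : a * q.1 + b * q.2 = c) (hpq : p ≠ q) (x : ℝ × ℝ) :
    (a * x.1 + b * x.2 = c) ↔ (q.1 - p.1) * (x.2 - p.2) = (q.2 - p.2) * (x.1 - p.1) := by
  have hab' : a ≠ 0 ∨ b ≠ 0 := by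
    by_contra h
    push_neg at h
    exact hab (by simp [h.1, h.2])
  have keyd : a * (q.1 - p.1) + b * (q.2 - p.2) = 0 := by ring_nf; linarith
  have hd : q.1 - p.1 ≠ 0 ∨ q.2 - p.2 ≠ 0 := by
    by_contra h
    push_neg at h
    exact hpq (Prod.ext (by linarith [h.1]) (by linarith [h.2]))
  constructor
  · intro hx
    have keyu : a * (x.1 - p.1) + b * (x.2 - p.2) = 0 := by ring_nf; linarith
    have h1 : a * ((q.1 - p.1) * (x.2 - p.2) - (q.2 - p.2) * (x.1 - p.1)) = 0 := by
      linear_combination (x.2 - p.2) * keyd - (q.2 - p.2) * keyu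
    have h2 : b * ((q.1 - p.1) * (x.2 - p.2) - (q.2 - p.2) * (x.1 - p.1)) = 0 := by
      linear_combination (-(x.1 - p.1)) * keyd + (q.1 - p.1) * keyu
    rcases hab' with h | h
    · have := (mul_eq_zero.1 h1).resolve_left h; linarith
    · have := (mul_eq_zero.1 h2).resolve_left h; linarith
  · intro hcol
    have goal0 : a * (x.1 - p.1) + b * (x.2 - p.2) = 0 := by
      have h1 : (q.1 - p.1) * (a * (x.1 - p.1) + b * (x.2 - p.2)) = 0 := by
        linear_combination (x.1 - p.1) * keyd + b * hcol
      have h2 : (q.2 - p.2) * (a * (x.1 - p.1) + b * (x.2 - p.2)) = 0 := by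
        linear_combination (x.2 - p.2) * keyd - a * hcol
      rcases hd with h | h
      · exact (mul_eq_zero.1 h1).resolve_left h
      · exact (mul_eq_zero.1 h2).resolve_left h
    linarith [goal0, hp]

lemma line_eq_of_two_mem {l l' : Set (ℝ × ℝ)} (hl : IsLine l) (hl' : IsLine l')
    {p q : ℝ × ℝ} (hpq : p ≠ q) (hp : p ∈ l) (hq : q ∈ l) (hp' : p ∈ l') (hq' : q ∈ l') :
    l = l' := by
  obtain ⟨a, b, c, hab, rfl⟩ := hl
  obtain ⟨a', b', c', hab', rfl⟩ := hl'
  simp only [Set.mem_setOf_eq] at hp hq hp' hq'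
  ext x
  simp only [Set.mem_setOf_eq]
  rw [mem_line_iff_collinear hab hp hq hpq x, mem_line_iff_collinear hab' hp' hq' hpq x]

lemma exists_perm_image_eq {α : Type*} [DecidableEq α] [Fintype α] :
    ∀ (k : ℕ) (A B : Finset α), A.card = k → B.card = k →
      ∃ σ : Equiv.Perm α, A.image σ = B := by
  intro k
  induction k with
  | zero =>
    intro A B hA hB
    refine ⟨1, ?_⟩
    rw [Finset.card_eq_zero] at hA hB
    simp [hA, hB]
  | succ m ih =>
    intro A B hA hB
    obtain ⟨a, ha⟩ : A.Nonempty := Finset.card_pos.1 (by omega)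
    obtain ⟨b, hb⟩ : B.Nonempty := Finset.card_pos.1 (by omega)
    obtain ⟨σ', hσ'⟩ := ih (A.erase a) (B.erase b)
      (by rw [Finset.card_erase_of_mem ha, hA]; omega)
      (by rw [Finset.card_erase_of_mem hb, hB]; omega)
    refine ⟨σ'.trans (Equiv.swap (σ' a) b), ?_⟩
    have hAa : A = insert a (A.erase a) := (Finset.insert_erase ha).symm
    have hnm : σ' a ∉ B.erase b := by
      rw [← hσ']
      intro hmem
      obtain ⟨x, hx, hxe⟩ := Finset.mem_image.1 hmem
      exact (Finset.mem_erase.1 hx).1 (σ'.injective hxe)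
    calc A.image (σ'.trans (Equiv.swap (σ' a) b))
        = (A.image σ').image (Equiv.swap (σ' a) b) := by
          rw [Finset.image_image]; rfl
      _ = B := by
          rw [hAa, Finset.image_insert, hσ', Finset.image_insert,
            Equiv.swap_apply_left]
          have : (B.erase b).image (Equiv.swap (σ' a) b) = B.erase b := by
            apply Finset.image_congr ?_ |>.trans (Finset.image_id)
            intro x hx
            simp only [Finset.mem_coe] at hx
            have hx1 : x ≠ b := (Finset.mem_erase.1 hx).1
            have hx2 : x ≠ σ' a := fun h => hnm (h ▸ hx)
            simp [Equiv.swap_apply_of_ne_of_ne hx2 hx1]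
          rw [this, Finset.insert_erase hb]

lemma perm_image_compl {α : Type*} [DecidableEq α] [Fintype α] (σ : Equiv.Perm α)
    (A : Finset α) : Aᶜ.image σ = (A.image σ)ᶜ := by
  ext x
  simp only [Finset.mem_image, Finset.mem_compl]
  constructor
  · rintro ⟨a, ha, rfl⟩ ⟨a', ha', he⟩
    exact ha (σ.injective he ▸ ha')
  · intro h
    exact ⟨σ.symm x, fun hmem => h ⟨σ.symm x, hmem, σ.apply_symm_apply x⟩,
      σ.apply_symm_apply x⟩

lemma swap_image_self {α : Type*} [DecidableEq α] {B : Finset α} {x b : α}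
    (hx : x ∈ B) (hb : b ∈ B) : B.image (Equiv.swap x b) = B := by
  apply Finset.eq_of_subset_of_card_le
  · intro y hy
    obtain ⟨z, hz, rfl⟩ := Finset.mem_image.1 hy
    rcases eq_or_ne z x with rfl | h1
    · simpa [Equiv.swap_apply_left] using hb
    rcases eq_or_ne z b with rfl | h2
    · simpa [Equiv.swap_apply_right] using hx
    · rwa [Equiv.swap_apply_of_ne_of_ne h1 h2]
  · rw [Finset.card_image_of_injective _ (Equiv.injective _)]

section
variable {n : ℕ}

lemma struct_family (hn : n ≤ 5) (F : Finset (Finset (Fin n)))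
    (h3 : ∀ A ∈ F, 3 ≤ A.card)
    (hi : ∀ A ∈ F, ∀ B ∈ F, A ≠ B → (A ∩ B).card ≤ 1) :
    F.card ≤ 2 ∧ ∀ A ∈ F, ∀ B ∈ F, A ≠ B →
      A.card = 3 ∧ (A ∩ B).card = 1 ∧ A ∪ B = Finset.univ := by
  have key : ∀ A ∈ F, ∀ B ∈ F, A ≠ B →
      A.card = 3 ∧ (A ∩ B).card = 1 ∧ A ∪ B = Finset.univ := by
    intro A hA B hB hAB
    have h1 : (A ∪ B).card + (A ∩ B).card = A.card + B.card :=
      Finset.card_union_add_card_inter A B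
    have h2 : (A ∪ B).card ≤ n := by
      simpa using Finset.card_le_univ (A ∪ B)
    have h3A := h3 A hA
    have h3B := h3 B hB
    have hiAB := hi A hA B hB hAB
    have hcA : A.card = 3 := by omega
    have hcI : (A ∩ B).card = 1 := by omega
    have hcU : (A ∪ B).card = n := by omega
    exact ⟨hcA, hcI, Finset.eq_univ_of_card _ (by simpa using hcU)⟩
  refine ⟨?_, key⟩
  by_contra h
  push_neg at h
  obtain ⟨A, hA, B, hB, C, hC, hAB, hAC, hBC⟩ := Finset.two_lt_card.1 h
  obtain ⟨_, _, hU⟩ := key A hA B hB hAB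
  have hCsub : C ⊆ A ∪ B := hU ▸ Finset.subset_univ C
  have : C = (C ∩ A) ∪ (C ∩ B) := by
    rw [← Finset.inter_union_distrib_left]
    exact (Finset.inter_eq_left.2 hCsub).symm
  have hcard : C.card ≤ (C ∩ A).card + (C ∩ B).card := by
    calc C.card = ((C ∩ A) ∪ (C ∩ B)).card := by rw [← this]
      _ ≤ _ := Finset.card_union_le _ _
  have h1 : (C ∩ A).card ≤ 1 := by
    rw [Finset.inter_comm]; exact hi A hA C hC hAC
  have h2 : (C ∩ B).card ≤ 1 := by
    rw [Finset.inter_comm]; exact hi B hB C hC hBC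
  have := h3 C hC
  omega

lemma classify (hn : n ≤ 5) (F₁ F₂ : Finset (Finset (Fin n)))
    (h₁3 : ∀ A ∈ F₁, 3 ≤ A.card) (h₂3 : ∀ A ∈ F₂, 3 ≤ A.card)
    (h₁i : ∀ A ∈ F₁, ∀ B ∈ F₁, A ≠ B → (A ∩ B).card ≤ 1)
    (h₂i : ∀ A ∈ F₂, ∀ B ∈ F₂, A ≠ B → (A ∩ B).card ≤ 1)
    (hc : ∀ k, (F₁.filter fun A => A.card = k).card
      = (F₂.filter fun A => A.card = k).card) :
    ∃ σ : Equiv.Perm (Fin n), F₂ = F₁.image fun A => A.image σ := by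
  obtain ⟨hF₁2, hkey₁⟩ := struct_family hn F₁ h₁3 h₁i
  obtain ⟨hF₂2, hkey₂⟩ := struct_family hn F₂ h₂3 h₂i
  -- empty case
  rcases Finset.eq_empty_or_nonempty F₁ with hF₁e | ⟨A, hA⟩
  · refine ⟨1, ?_⟩
    rcases Finset.eq_empty_or_nonempty F₂ with hF₂e | ⟨B, hB⟩
    · simp [hF₁e, hF₂e]
    · exfalso
      have := hc B.card
      rw [hF₁e] at this
      simp only [Finset.filter_empty, Finset.card_empty] at this
      have : B ∈ F₂.filter fun A => A.card = B.card := Finset.mem_filter.2 ⟨hB, rfl⟩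
      have hpos := Finset.card_pos.2 ⟨B, this⟩
      omega
  -- F₂ nonempty
  have hF₂ne : F₂.Nonempty := by
    by_contra hne
    rw [Finset.not_nonempty_iff_eq_empty] at hne
    have := hc A.card
    rw [hne] at this
    simp only [Finset.filter_empty, Finset.card_empty] at this
    have hmem : A ∈ F₁.filter fun X => X.card = A.card := Finset.mem_filter.2 ⟨hA, rfl⟩
    have hpos := Finset.card_pos.2 ⟨A, hmem⟩
    omega
  obtain ⟨B, hB⟩ := hF₂ne
  rcases eq_or_ne F₁ {A} with hF₁s | hF₁ne
  · -- one big point on each side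
    have hF₂s : F₂ = {B} := by
      rcases Finset.eq_singleton_or_nontrivial hB with h | h
      · exact h
      · exfalso
        obtain ⟨B', hB', hBB'⟩ := h.exists_ne B
        have hB3 := (hkey₂ B' hB' B hB hBB').1
        have hB'3 := (hkey₂ B hB B' hB' (Ne.symm hBB')).1
        have hsub : {B, B'} ⊆ F₂.filter fun X => X.card = 3 := by
          intro x hx
          rcases Finset.mem_insert.1 hx with rfl | hx
          · exact Finset.mem_filter.2 ⟨hB, hB'3⟩
          · rw [Finset.mem_singleton] at hx
            subst hx
            exact Finset.mem_filter.2 ⟨hB', hB3⟩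
        have h2 : ({B, B'} : Finset (Finset (Fin n))).card = 2 :=
          Finset.card_pair (Ne.symm hBB')
        have hle2 := Finset.card_le_card hsub
        have hle1 : (F₁.filter fun X => X.card = 3).card ≤ 1 := by
          rw [hF₁s]
          exact (Finset.card_filter_le _ _).trans (by simp)
        have := hc 3
        omega
    -- B has same card as A
    have hAB : B.card = A.card := by
      have := hc A.card
      rw [hF₁s, hF₂s] at this
      simp only [Finset.filter_singleton, if_pos rfl, Finset.card_singleton] at this
      by_contra hne
      rw [if_neg hne] at this
      simp at this
    obtain ⟨σ, hσ⟩ := exists_perm_image_eq A.card A B rfl hAB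
    exact ⟨σ, by rw [hF₁s, hF₂s, Finset.image_singleton, hσ]⟩
  · -- two big points on each side
    obtain ⟨A', hA', hAA'⟩ : ∃ A' ∈ F₁, A' ≠ A := by
      by_contra h
      push_neg at h
      exact hF₁ne (Finset.eq_singleton_iff_unique_mem.2 ⟨hA, fun x hx => h x hx⟩)
    have hsub : ({A, A'} : Finset (Finset (Fin n))) ⊆ F₁ := by
      intro x hx
      rcases Finset.mem_insert.1 hx with rfl | hx
      · exact hA
      · rw [Finset.mem_singleton] at hx; subst hx; exact hA'
    have hF₁s : F₁ = {A, A'} :=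
      (Finset.eq_of_subset_of_card_le hsub
        (by rw [Finset.card_pair (Ne.symm hAA')]; exact hF₁2)).symm
    have hA3 := (hkey₁ A hA A' hA' (Ne.symm hAA')).1
    have hA'3 := (hkey₁ A' hA' A hA hAA').1
    have hAint := (hkey₁ A hA A' hA' (Ne.symm hAA')).2.1
    have hAun := (hkey₁ A hA A' hA' (Ne.symm hAA')).2.2
    -- F₂ has two elements of card 3
    have hcount₁ : (F₁.filter fun X => X.card = 3).card = 2 := by
      have : F₁.filter (fun X => X.card = 3) = F₁ := by
        apply Finset.filter_true_of_mem
        intro x hx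
        rw [hF₁s] at hx
        rcases Finset.mem_insert.1 hx with rfl | hx
        · exact hA3
        · rw [Finset.mem_singleton] at hx; subst hx; exact hA'3
      rw [this, hF₁s, Finset.card_pair (Ne.symm hAA')]
    have hcount₂ : (F₂.filter fun X => X.card = 3).card = 2 := by
      rw [← hc 3]; exact hcount₁
    obtain ⟨B₁, hB₁m, B₂, hB₂m, hB₁₂⟩ :=
      Finset.one_lt_card.1 (by omega : 1 < (F₂.filter fun X => X.card = 3).card)
    have hB₁ : B₁ ∈ F₂ := (Finset.mem_filter.1 hB₁m).1
    have hB₂ : B₂ ∈ F₂ := (Finset.mem_filter.1 hB₂m).1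
    have hB₁3 : B₁.card = 3 := (Finset.mem_filter.1 hB₁m).2
    have hsub₂ : ({B₁, B₂} : Finset (Finset (Fin n))) ⊆ F₂ := by
      intro x hx
      rcases Finset.mem_insert.1 hx with rfl | hx
      · exact hB₁
      · rw [Finset.mem_singleton] at hx; subst hx; exact hB₂
    have hF₂s : F₂ = {B₁, B₂} :=
      (Finset.eq_of_subset_of_card_le hsub₂
        (by rw [Finset.card_pair hB₁₂]; exact hF₂2)).symm
    have hBint := (hkey₂ B₁ hB₁ B₂ hB₂ hB₁₂).2.1
    have hBun := (hkey₂ B₁ hB₁ B₂ hB₂ hB₁₂).2.2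
    -- shared elements
    obtain ⟨a, ha⟩ := Finset.card_eq_one.1 hAint
    obtain ⟨b, hbb⟩ := Finset.card_eq_one.1 hBint
    have haA : a ∈ A := (Finset.mem_inter.1 (ha ▸ Finset.mem_singleton_self a)).1
    have haA' : a ∈ A' := (Finset.mem_inter.1 (ha ▸ Finset.mem_singleton_self a)).2
    have hbB : b ∈ B₁ := (Finset.mem_inter.1 (hbb ▸ Finset.mem_singleton_self b)).1
    have hbB' : b ∈ B₂ := (Finset.mem_inter.1 (hbb ▸ Finset.mem_singleton_self b)).2
    -- A' = insert a Aᶜ,  B₂ = insert b B₁ᶜ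
    have hcompl : ∀ (X Y : Finset (Fin n)) (c : Fin n), X ∩ Y = {c} → X ∪ Y = Finset.univ →
        Y = insert c Xᶜ := by
      intro X Y c hXY hXYu
      ext x
      simp only [Finset.mem_insert, Finset.mem_compl]
      constructor
      · intro hx
        rcases eq_or_ne x c with rfl | hxc
        · exact Or.inl rfl
        · refine Or.inr fun hxX => hxc ?_
          have : x ∈ X ∩ Y := Finset.mem_inter.2 ⟨hxX, hx⟩
          rw [hXY] at this
          exact Finset.mem_singleton.1 this
      · rintro (rfl | hx)
        · exact (Finset.mem_inter.1 (hXY ▸ Finset.mem_singleton_self x)).2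
        · have : x ∈ X ∪ Y := hXYu ▸ Finset.mem_univ x
          rcases Finset.mem_union.1 this with h | h
          · exact absurd h hx
          · exact h
    have hA'eq : A' = insert a Aᶜ := hcompl A A' a ha hAun
    have hB₂eq : B₂ = insert b B₁ᶜ := hcompl B₁ B₂ b hbb hBun
    obtain ⟨σ₁, hσ₁⟩ := exists_perm_image_eq 3 A B₁ hA3 hB₁3
    set τ := Equiv.swap (σ₁ a) b with hτ
    set σ := σ₁.trans τ with hσdef
    have hσA : A.image σ = B₁ := by
      have : A.image σ = (A.image σ₁).image τ := by
        rw [Finset.image_image]; rfl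
      rw [this, hσ₁]
      exact swap_image_self (hσ₁ ▸ Finset.mem_image_of_mem _ haA) hbB
    have hσa : σ a = b := by
      show τ (σ₁ a) = b
      exact Equiv.swap_apply_left _ _
    have hσA' : A'.image σ = B₂ := by
      rw [hA'eq, hB₂eq, Finset.image_insert, hσa, perm_image_compl, hσA]
    refine ⟨σ, ?_⟩
    rw [hF₁s, hF₂s, Finset.image_insert, Finset.image_singleton, hσA, hσA']
end

/-- index set of lines through `p`. -/
noncomputable def Sfun {n : ℕ} (g : Fin n → Set (ℝ × ℝ)) (p : ℝ × ℝ) : Finset (Fin n) :=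
  Finset.univ.filter fun i => p ∈ g i

lemma mem_Sfun {n : ℕ} {g : Fin n → Set (ℝ × ℝ)} {p : ℝ × ℝ} {i : Fin n} :
    i ∈ Sfun g p ↔ p ∈ g i := by simp [Sfun]

section Arr
variable {n : ℕ} {L : Finset (Set (ℝ × ℝ))} {g : Fin n → Set (ℝ × ℝ)}
  (hg : Function.Injective g) (hgL : ∀ i, g i ∈ L) (hLg : ∀ l ∈ L, ∃ i, g i = l)

include hg hgL hLg in
lemma mult_eq (p : ℝ × ℝ) : multiplicity' L p = (Sfun g p).card := by
  unfold multiplicity' Sfun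
  rw [eq_comm]
  apply Finset.card_bij (fun i _ => g i)
  · intro i hi
    simp only [Finset.mem_filter, Finset.mem_univ, true_and] at hi
    exact Finset.mem_filter.2 ⟨hgL i, hi⟩
  · intro i _ j _ h
    exact hg h
  · intro l hl
    obtain ⟨hlL, hpl⟩ := Finset.mem_filter.1 hl
    obtain ⟨i, rfl⟩ := hLg l hlL
    exact ⟨i, by simp [hpl], rfl⟩

variable (hline : ∀ l ∈ L, IsLine l)

include hg hgL hline in
lemma S_inter_le_one {p q : ℝ × ℝ} (hpq : p ≠ q) :
    (Sfun g p ∩ Sfun g q).card ≤ 1 := by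
  by_contra h
  push_neg at h
  obtain ⟨i, hi, j, hj, hij⟩ := Finset.one_lt_card.1 h
  rw [Finset.mem_inter, mem_Sfun, mem_Sfun] at hi hj
  have : g i = g j :=
    line_eq_of_two_mem (hline _ (hgL i)) (hline _ (hgL j)) hpq hi.1 hi.2 hj.1 hj.2
  exact hij (hg this)

include hg hgL hLg hline in
lemma S_injOn {P : Finset (ℝ × ℝ)} (hP : ∀ p, p ∈ P ↔ 2 ≤ multiplicity' L p)
    {p q : ℝ × ℝ} (hp : p ∈ P) (hq : q ∈ P) (h : Sfun g p = Sfun g q) : p = q := by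
  by_contra hpq
  have h2 : 2 ≤ (Sfun g p).card := by
    rw [← mult_eq hg hgL hLg]; exact (hP p).1 hp
  have := S_inter_le_one hg hgL hline hpq (q := q)
  rw [← h, Finset.inter_self] at this
  omega

variable (hmeet : ∀ l ∈ L, ∀ l' ∈ L, l ≠ l' → ∃ p, p ∈ l ∧ p ∈ l')
  {P : Finset (ℝ × ℝ)} (hP : ∀ p, p ∈ P ↔ 2 ≤ multiplicity' L p)

include hg hgL hLg hline hmeet hP in
lemma full_eq :
    P.image (Sfun g) =
      ((P.image (Sfun g)).filter fun A => 3 ≤ A.card) ∪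
      (Finset.univ.filter fun A : Finset (Fin n) =>
        A.card = 2 ∧ ∀ B ∈ (P.image (Sfun g)).filter (fun X => 3 ≤ X.card), ¬ A ⊆ B) := by
  ext A
  simp only [Finset.mem_union, Finset.mem_filter, Finset.mem_univ, true_and,
    Finset.mem_image]
  constructor
  · rintro ⟨p, hp, rfl⟩
    have h2 : 2 ≤ (Sfun g p).card := by
      rw [← mult_eq hg hgL hLg]; exact (hP p).1 hp
    rcases le_or_gt 3 (Sfun g p).card with h3 | h3
    · exact Or.inl ⟨⟨p, hp, rfl⟩, h3⟩
    · refine Or.inr ⟨by omega, ?_⟩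
      rintro B ⟨⟨q, hq, rfl⟩, hq3⟩ hsub
      have hpq : p ≠ q := by
        intro he; rw [he] at h3; omega
      have hint : (Sfun g p ∩ Sfun g q).card ≤ 1 :=
        S_inter_le_one hg hgL hline hpq
      rw [Finset.inter_eq_left.2 hsub] at hint
      omega
  · rintro (⟨hA, _⟩ | ⟨h2, hnd⟩)
    · exact hA
    · obtain ⟨i, j, hij, rfl⟩ := Finset.card_eq_two.1 h2
      have hgij : g i ≠ g j := fun h => hij (hg h)
      obtain ⟨p, hpi, hpj⟩ := hmeet _ (hgL i) _ (hgL j) hgij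
      have hsub : ({i, j} : Finset (Fin n)) ⊆ Sfun g p := by
        intro x hx
        rcases Finset.mem_insert.1 hx with rfl | hx
        · exact mem_Sfun.2 hpi
        · rw [Finset.mem_singleton] at hx; subst hx; exact mem_Sfun.2 hpj
      have hcard2 : 2 ≤ (Sfun g p).card := by
        calc 2 = ({i, j} : Finset (Fin n)).card := (Finset.card_pair hij).symm
          _ ≤ _ := Finset.card_le_card hsub
      have hpP : p ∈ P := (hP p).2 (by rw [mult_eq hg hgL hLg]; exact hcard2)
      have hcard3 : ¬ 3 ≤ (Sfun g p).card := by
        intro h3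
        exact hnd (Sfun g p) ⟨⟨p, hpP, rfl⟩, h3⟩ hsub
      have : ({i, j} : Finset (Fin n)) = Sfun g p :=
        Finset.eq_of_subset_of_card_le hsub (by rw [Finset.card_pair hij]; omega)
      exact ⟨p, hpP, this.symm⟩
end Arr

/-- For arrangements of at most 5 pairwise-intersecting lines in the
real plane, the signature (the number `n_k` of points of each multiplicity `k`)
determines the incidence lattice: any two such arrangements with the same number of
lines and equal signatures admit incidence-preserving bijections between their lines
and between their intersection points. -/
theorem signature_determines_lattice_up_to_five_lines
    (L₁ L₂ : Finset (Set (ℝ × ℝ))) (P₁ P₂ : Finset (ℝ × ℝ))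
    (hL₁ : ∀ l ∈ L₁, IsLine l) (hL₂ : ∀ l ∈ L₂, IsLine l)
    (hle : L₁.card ≤ 5) (hcard : L₁.card = L₂.card)
    (hmeet₁ : ∀ l ∈ L₁, ∀ l' ∈ L₁, l ≠ l' → ∃ p, p ∈ l ∧ p ∈ l')
    (hmeet₂ : ∀ l ∈ L₂, ∀ l' ∈ L₂, l ≠ l' → ∃ p, p ∈ l ∧ p ∈ l')
    (hP₁ : ∀ p, p ∈ P₁ ↔ 2 ≤ multiplicity' L₁ p)
    (hP₂ : ∀ p, p ∈ P₂ ↔ 2 ≤ multiplicity' L₂ p)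
    (hsig : ∀ k : ℕ, (P₁.filter fun p => multiplicity' L₁ p = k).card
        = (P₂.filter fun p => multiplicity' L₂ p = k).card) :
    ∃ (e : Set (ℝ × ℝ) → Set (ℝ × ℝ)) (f : ℝ × ℝ → ℝ × ℝ),
      Set.BijOn e ↑L₁ ↑L₂ ∧ Set.BijOn f ↑P₁ ↑P₂ ∧
      ∀ l ∈ L₁, ∀ p ∈ P₁, (p ∈ l ↔ f p ∈ e l) := by
  classical
  set n := L₁.card with hn
  -- enumerations
  set g₁ : Fin n → Set (ℝ × ℝ) := fun i => (L₁.equivFin.symm i : Set (ℝ × ℝ)) with hg₁def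
  set g₂ : Fin n → Set (ℝ × ℝ) :=
    fun i => (L₂.equivFin.symm (finCongr hcard i) : Set (ℝ × ℝ)) with hg₂def
  have hg₁ : Function.Injective g₁ := by
    intro i j h
    have : L₁.equivFin.symm i = L₁.equivFin.symm j := Subtype.ext h
    exact L₁.equivFin.symm.injective this
  have hg₂ : Function.Injective g₂ := by
    intro i j h
    have : L₂.equivFin.symm (finCongr hcard i) = L₂.equivFin.symm (finCongr hcard j) :=
      Subtype.ext h
    exact (finCongr hcard).injective (L₂.equivFin.symm.injective this)
  have hgL₁ : ∀ i, g₁ i ∈ L₁ := fun i => (L₁.equivFin.symm i).2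
  have hgL₂ : ∀ i, g₂ i ∈ L₂ := fun i => (L₂.equivFin.symm (finCongr hcard i)).2
  have hLg₁ : ∀ l ∈ L₁, ∃ i, g₁ i = l := by
    intro l hl
    exact ⟨L₁.equivFin ⟨l, hl⟩, by simp [hg₁def]⟩
  have hLg₂ : ∀ l ∈ L₂, ∃ i, g₂ i = l := by
    intro l hl
    refine ⟨(finCongr hcard).symm (L₂.equivFin ⟨l, hl⟩), ?_⟩
    simp [hg₂def]
  -- families
  set Full₁ : Finset (Finset (Fin n)) := P₁.image (Sfun g₁) with hFull₁def
  set Full₂ : Finset (Finset (Fin n)) := P₂.image (Sfun g₂) with hFull₂def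
  set Big₁ : Finset (Finset (Fin n)) := Full₁.filter (fun A => 3 ≤ A.card) with hBig₁def
  set Big₂ : Finset (Finset (Fin n)) := Full₂.filter (fun A => 3 ≤ A.card) with hBig₂def
  -- Big properties
  have hBig₁3 : ∀ A ∈ Big₁, 3 ≤ A.card := fun A hA => (Finset.mem_filter.1 hA).2
  have hBig₂3 : ∀ A ∈ Big₂, 3 ≤ A.card := fun A hA => (Finset.mem_filter.1 hA).2
  have hBig₁i : ∀ A ∈ Big₁, ∀ B ∈ Big₁, A ≠ B → (A ∩ B).card ≤ 1 := by
    intro A hA B hB hAB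
    obtain ⟨p, hp, rfl⟩ := Finset.mem_image.1 (Finset.mem_filter.1 hA).1
    obtain ⟨q, hq, rfl⟩ := Finset.mem_image.1 (Finset.mem_filter.1 hB).1
    exact S_inter_le_one hg₁ hgL₁ hL₁ (fun h => hAB (by rw [h]))
  have hBig₂i : ∀ A ∈ Big₂, ∀ B ∈ Big₂, A ≠ B → (A ∩ B).card ≤ 1 := by
    intro A hA B hB hAB
    obtain ⟨p, hp, rfl⟩ := Finset.mem_image.1 (Finset.mem_filter.1 hA).1
    obtain ⟨q, hq, rfl⟩ := Finset.mem_image.1 (Finset.mem_filter.1 hB).1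
    exact S_inter_le_one hg₂ hgL₂ hL₂ (fun h => hAB (by rw [h]))
  -- counts
  have hcounts : ∀ k, (Big₁.filter fun A => A.card = k).card
      = (Big₂.filter fun A => A.card = k).card := by
    intro k
    rcases lt_or_ge k 3 with hk | hk
    · have h1 : Big₁.filter (fun A => A.card = k) = ∅ := by
        apply Finset.filter_eq_empty_iff.2
        intro A hA hAk
        have := hBig₁3 A hA
        omega
      have h2 : Big₂.filter (fun A => A.card = k) = ∅ := by
        apply Finset.filter_eq_empty_iff.2
        intro A hA hAk
        have := hBig₂3 A hA
        omega
      rw [h1, h2]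
    · have hrepr : ∀ (L : Finset (Set (ℝ × ℝ))) (P : Finset (ℝ × ℝ))
          (g : Fin n → Set (ℝ × ℝ)), Function.Injective g → (∀ i, g i ∈ L) →
          (∀ l ∈ L, ∃ i, g i = l) → (∀ l ∈ L, IsLine l) →
          (∀ p, p ∈ P ↔ 2 ≤ multiplicity' L p) →
          (((P.image (Sfun g)).filter (fun A => 3 ≤ A.card)).filter
              (fun A => A.card = k)).card
            = (P.filter fun p => multiplicity' L p = k).card := by
        intro L P g hg hgL hLg hline hP
        rw [Finset.filter_filter]
        have himg : (P.image (Sfun g)).filter (fun A => 3 ≤ A.card ∧ A.card = k)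
            = (P.filter fun p => multiplicity' L p = k).image (Sfun g) := by
          ext A
          simp only [Finset.mem_filter, Finset.mem_image]
          constructor
          · rintro ⟨⟨p, hp, rfl⟩, _, hAk⟩
            exact ⟨p, ⟨hp, by rw [mult_eq hg hgL hLg]; exact hAk⟩, rfl⟩
          · rintro ⟨p, ⟨hp, hpk⟩, rfl⟩
            rw [mult_eq hg hgL hLg] at hpk
            exact ⟨⟨p, hp, rfl⟩, by omega, hpk⟩
        rw [himg]
        apply Finset.card_image_of_injOn
        intro p hp q hq h
        exact S_injOn hg hgL hLg hline hP (Finset.mem_of_mem_filter _ hp)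
          (Finset.mem_of_mem_filter _ hq) h
      rw [hBig₁def, hBig₂def, hFull₁def, hFull₂def,
        hrepr L₁ P₁ g₁ hg₁ hgL₁ hLg₁ hL₁ hP₁,
        hrepr L₂ P₂ g₂ hg₂ hgL₂ hLg₂ hL₂ hP₂]
      exact hsig k
  -- classification
  obtain ⟨σ, hσ⟩ := classify hle Big₁ Big₂ hBig₁3 hBig₂3 hBig₁i hBig₂i hcounts
  set Φ : Finset (Fin n) → Finset (Fin n) := fun A => A.image σ with hΦdef
  have hΦinv : ∀ A, (Φ A).image σ.symm = A := by
    intro A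
    ext x
    simp [hΦdef]
  have hΦinv' : ∀ A, Φ (A.image σ.symm) = A := by
    intro A
    ext x
    simp [hΦdef]
  have hΦinj : Function.Injective Φ := by
    intro A B h
    rw [← hΦinv A, ← hΦinv B, h]
  have hΦcard : ∀ A, (Φ A).card = A.card :=
    fun A => Finset.card_image_of_injective _ σ.injective
  have hΦsub : ∀ A B, A ⊆ B ↔ Φ A ⊆ Φ B := by
    intro A B
    constructor
    · exact fun h => Finset.image_subset_image h
    · intro h a ha
      have : σ a ∈ Φ B := h (Finset.mem_image_of_mem _ ha)
      obtain ⟨b, hb, hba⟩ := Finset.mem_image.1 this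
      exact σ.injective hba ▸ hb
  -- Full₂ is image of Full₁
  have hfull : Full₂ = Full₁.image Φ := by
    have hfe₁ := full_eq hg₁ hgL₁ hLg₁ hL₁ hmeet₁ hP₁
    have hfe₂ := full_eq hg₂ hgL₂ hLg₂ hL₂ hmeet₂ hP₂
    have hTeq : (Finset.univ.filter fun A : Finset (Fin n) =>
          A.card = 2 ∧ ∀ B ∈ Big₂, ¬ A ⊆ B)
        = Finset.image Φ (Finset.univ.filter fun A : Finset (Fin n) =>
          A.card = 2 ∧ ∀ B ∈ Big₁, ¬ A ⊆ B) := by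
      ext C
      simp only [Finset.mem_filter, Finset.mem_univ, true_and, Finset.mem_image]
      constructor
      · rintro ⟨hC2, hCnd⟩
        refine ⟨C.image σ.symm, ⟨?_, ?_⟩, hΦinv' C⟩
        · rw [← hΦcard (C.image σ.symm), hΦinv' C]; exact hC2
        · intro B hB hsub
          have : Φ (C.image σ.symm) ⊆ Φ B := (hΦsub _ _).1 hsub
          rw [hΦinv' C] at this
          exact hCnd (Φ B) (hσ ▸ Finset.mem_image_of_mem Φ hB) this
      · rintro ⟨A, ⟨hA2, hAnd⟩, rfl⟩
        refine ⟨by rw [hΦcard]; exact hA2, ?_⟩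
        intro B' hB' hsub
        rw [hσ] at hB'
        obtain ⟨B, hB, rfl⟩ := Finset.mem_image.1 hB'
        exact hAnd B hB ((hΦsub _ _).2 hsub)
    rw [hFull₁def, hFull₂def, hfe₁, hfe₂, Finset.image_union,
      ← hFull₁def, ← hFull₂def, ← hBig₁def, ← hBig₂def, hTeq, hσ]
  -- the point correspondence
  have hFullmem : ∀ p ∈ P₁, ∃ q, q ∈ P₂ ∧ Sfun g₂ q = Φ (Sfun g₁ p) := by
    intro p hp
    have : Φ (Sfun g₁ p) ∈ Full₂ := by
      rw [hfull]
      exact Finset.mem_image_of_mem Φ (Finset.mem_image_of_mem _ hp)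
    obtain ⟨q, hq, hqe⟩ := Finset.mem_image.1 this
    exact ⟨q, hq, hqe⟩
  set f : ℝ × ℝ → ℝ × ℝ :=
    fun p => if h : p ∈ P₁ then (hFullmem p h).choose else p with hfdef
  have hfspec : ∀ p (h : p ∈ P₁), f p ∈ P₂ ∧ Sfun g₂ (f p) = Φ (Sfun g₁ p) := by
    intro p h
    rw [hfdef]
    simp only [dif_pos h]
    exact (hFullmem p h).choose_spec
  set e : Set (ℝ × ℝ) → Set (ℝ × ℝ) :=
    fun l => if h : l ∈ L₁ then g₂ (σ (L₁.equivFin ⟨l, h⟩)) else l with hedef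
  have hespec : ∀ i, e (g₁ i) = g₂ (σ i) := by
    intro i
    have hmem : g₁ i ∈ L₁ := hgL₁ i
    rw [hedef]
    simp only [dif_pos hmem]
    have : (⟨g₁ i, hmem⟩ : {x // x ∈ L₁}) = L₁.equivFin.symm i := Subtype.ext rfl
    rw [this]
    simp
  have hespec' : ∀ l (h : l ∈ L₁), e l = g₂ (σ (L₁.equivFin ⟨l, h⟩)) := by
    intro l h
    rw [hedef]
    simp only [dif_pos h]
  refine ⟨e, f, ⟨?_, ?_, ?_⟩, ⟨?_, ?_, ?_⟩, ?_⟩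
  · -- MapsTo e
    intro l hl
    rw [Finset.mem_coe] at hl
    rw [hespec' l hl]
    exact hgL₂ _
  · -- InjOn e
    intro l hl l' hl' h
    rw [Finset.mem_coe] at hl hl'
    rw [hespec' l hl, hespec' l' hl'] at h
    have := L₁.equivFin.injective (σ.injective (hg₂ h))
    exact congrArg Subtype.val this
  · -- SurjOn e
    intro l' hl'
    rw [Finset.mem_coe] at hl'
    obtain ⟨j, rfl⟩ := hLg₂ l' hl'
    refine ⟨g₁ (σ.symm j), Finset.mem_coe.2 (hgL₁ _), ?_⟩
    rw [hespec]
    simp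
  · -- MapsTo f
    intro p hp
    rw [Finset.mem_coe] at hp
    exact Finset.mem_coe.2 (hfspec p hp).1
  · -- InjOn f
    intro p hp q hq h
    rw [Finset.mem_coe] at hp hq
    have h1 := (hfspec p hp).2
    have h2 := (hfspec q hq).2
    rw [h] at h1
    have : Φ (Sfun g₁ p) = Φ (Sfun g₁ q) := by rw [← h1, ← h2]
    exact S_injOn hg₁ hgL₁ hLg₁ hL₁ hP₁ hp hq (hΦinj this)
  · -- SurjOn f
    intro q hq
    rw [Finset.mem_coe] at hq
    have : Sfun g₂ q ∈ Full₁.image Φ := by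
      rw [← hfull, hFull₂def]
      exact Finset.mem_image_of_mem _ hq
    obtain ⟨A, hA, hAe⟩ := Finset.mem_image.1 this
    obtain ⟨p, hp, rfl⟩ := Finset.mem_image.1 hA
    refine ⟨p, Finset.mem_coe.2 hp, ?_⟩
    have h1 := (hfspec p hp).2
    rw [hAe] at h1
    exact S_injOn hg₂ hgL₂ hLg₂ hL₂ hP₂ (hfspec p hp).1 hq h1
  · -- incidence
    intro l hl p hp
    obtain ⟨i, rfl⟩ := hLg₁ l hl
    rw [hespec]
    have hS := (hfspec p hp).2
    constructor
    · intro hpl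
      have : σ i ∈ Φ (Sfun g₁ p) := Finset.mem_image_of_mem _ (mem_Sfun.2 hpl)
      rw [← hS] at this
      exact mem_Sfun.1 this
    · intro hfp
      have : σ i ∈ Φ (Sfun g₁ p) := by rw [← hS]; exact mem_Sfun.2 hfp
      obtain ⟨j, hj, hje⟩ := Finset.mem_image.1 this
      have : j = i := σ.injective hje
      subst this
      exact mem_Sfun.1 hj
end

section
/- Up to isomorphism, there is a unique 3-regular bipartite graph structure realizing the following: a set C of 8 'curves' and a set P of 12 'points' with an incidence relation such that every two distinct curves are incident to exactly one common point, exactly 4 points are incident to exactly 2 curves, and exactly 8 points are incident to exactly 3 curves — and at least one such structure exists. -/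
open scoped Classical

/-- An abstract incidence structure on 8 'curves' and 12 'points' realizing the
signature `[2^4 3^8]`: every two distinct curves are incident to exactly one common
point, exactly 4 points are incident to exactly 2 curves, and exactly 8 points are
incident to exactly 3 curves. -/
def IsSig2438Structure (R : Fin 8 → Fin 12 → Prop) : Prop :=
  (∀ c c' : Fin 8, c ≠ c' → ∃! p : Fin 12, R c p ∧ R c' p) ∧
  (Finset.univ.filter fun p : Fin 12 =>
      (Finset.univ.filter fun c : Fin 8 => R c p).card = 2).card = 4 ∧
  (Finset.univ.filter fun p : Fin 12 =>
      (Finset.univ.filter fun c : Fin 8 => R c p).card = 3).card = 8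

namespace Sig2438

def blk0 : Fin 12 → Finset (Fin 8) :=
  ![{0,1},{2,3},{4,5},{6,7},{0,2,4},{1,3,5},{0,3,6},{1,2,7},{0,5,7},{1,4,6},{2,5,6},{3,4,7}]

abbrev R0 : Fin 8 → Fin 12 → Prop := fun c p => c ∈ blk0 p

variable (R : Fin 8 → Fin 12 → Prop)

noncomputable def blk (p : Fin 12) : Finset (Fin 8) :=
  @Finset.filter _ (fun c => R c p) (fun _ => Classical.propDecidable _) Finset.univ

noncomputable def dg (p : Fin 12) : ℕ := (blk R p).card

lemma mem_blk {c p} : c ∈ blk R p ↔ R c p := by simp [blk]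

variable {R}

lemma hD2 (hR : IsSig2438Structure R) :
    (Finset.univ.filter fun p => dg R p = 2).card = 4 := hR.2.1
lemma hD3 (hR : IsSig2438Structure R) :
    (Finset.univ.filter fun p => dg R p = 3).card = 8 := hR.2.2

lemma deg23 (hR : IsSig2438Structure R) : ∀ p, dg R p = 2 ∨ dg R p = 3 := by
  intro p
  by_contra h
  push_neg at h
  have hdisj : Disjoint (Finset.univ.filter fun p => dg R p = 2)
      (Finset.univ.filter fun p => dg R p = 3) := by
    simp only [Finset.disjoint_left, Finset.mem_filter]
    rintro q ⟨-, h2⟩ ⟨-, h3⟩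
    omega
  have hcard : ((Finset.univ.filter fun p => dg R p = 2) ∪
      (Finset.univ.filter fun p => dg R p = 3)).card = 12 := by
    rw [Finset.card_union_of_disjoint hdisj, hD2 hR, hD3 hR]
  have huniv := Finset.eq_univ_of_card _ hcard
  have hp : p ∈ (Finset.univ.filter fun p => dg R p = 2) ∪
      (Finset.univ.filter fun p => dg R p = 3) := by
    rw [huniv]; exact Finset.mem_univ p
  simp only [Finset.mem_union, Finset.mem_filter] at hp
  tauto

/-- total version of existence of the common point -/
lemma exF (hR : IsSig2438Structure R) :
    ∀ c c' : Fin 8, ∃ p, c ≠ c' → R c p ∧ R c' p := by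
  intro c c'
  by_cases h : c ≠ c'
  · obtain ⟨p, hp, -⟩ := hR.1 c c' h
    exact ⟨p, fun _ => hp⟩
  · exact ⟨0, fun hc => absurd hc h⟩

noncomputable def Fpt (hR : IsSig2438Structure R) (c c' : Fin 8) : Fin 12 :=
  (exF hR c c').choose

lemma Fpt_mem (hR : IsSig2438Structure R) {c c' : Fin 8} (h : c ≠ c') :
    R c (Fpt hR c c') ∧ R c' (Fpt hR c c') := (exF hR c c').choose_spec h

lemma Fpt_uniq (hR : IsSig2438Structure R) {c c' : Fin 8} (h : c ≠ c') {q}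
    (h1 : R c q) (h2 : R c' q) : q = Fpt hR c c' := by
  obtain ⟨p, hp, hu⟩ := hR.1 c c' h
  rw [hu q ⟨h1, h2⟩, hu (Fpt hR c c') ⟨(Fpt_mem hR h).1, (Fpt_mem hR h).2⟩]

lemma Fpt_symm (hR : IsSig2438Structure R) {c c' : Fin 8} (h : c ≠ c') :
    Fpt hR c' c = Fpt hR c c' :=
  Fpt_uniq hR h (Fpt_mem hR h.symm).2 (Fpt_mem hR h.symm).1

/-- the basic count: each curve sees degree-minus-one summing to 7 -/
lemma sum_seven (hR : IsSig2438Structure R) (c : Fin 8) :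
    ∑ p ∈ @Finset.filter _ (fun p => R c p) (fun _ => Classical.propDecidable _) Finset.univ,
      (dg R p - 1) = 7 := by
  classical
  set Sc := @Finset.filter _ (fun p => R c p) (fun _ => Classical.propDecidable _)
      Finset.univ with hSc
  have hmem : ∀ c' ∈ Finset.univ.erase c, Fpt hR c c' ∈ Sc := by
    intro c' hc'
    have h : c ≠ c' := (Finset.ne_of_mem_erase hc').symm
    rw [hSc, Finset.mem_filter]
    exact ⟨Finset.mem_univ _, (Fpt_mem hR h).1⟩
  have hcard := Finset.card_eq_sum_card_fiberwise hmem
  have hfib : ∀ p ∈ Sc,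
      ((Finset.univ.erase c).filter fun c' => Fpt hR c c' = p).card = dg R p - 1 := by
    intro p hp
    have hRcp : R c p := by
      rw [hSc, Finset.mem_filter] at hp; exact hp.2
    have hset : ((Finset.univ.erase c).filter fun c' => Fpt hR c c' = p)
        = (blk R p).erase c := by
      ext c'
      simp only [Finset.mem_filter, Finset.mem_erase, Finset.mem_univ, true_and, and_true,
        mem_blk]
      constructor
      · rintro ⟨hne, hF⟩
        refine ⟨hne, ?_⟩
        have := (Fpt_mem hR (Ne.symm hne)).2
        rwa [hF] at this
      · rintro ⟨hne, hRc'⟩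
        exact ⟨hne, (Fpt_uniq hR (Ne.symm hne) hRcp hRc').symm⟩
    rw [hset, Finset.card_erase_of_mem ((mem_blk R).mpr hRcp)]
    rfl
  have h7 : (Finset.univ.erase c).card = 7 := by
    rw [Finset.card_erase_of_mem (Finset.mem_univ c)]; rfl
  rw [h7, Finset.sum_congr rfl hfib] at hcard
  omega

variable (R) in
noncomputable def a2 (c : Fin 8) : ℕ :=
  ((@Finset.filter _ (fun p => R c p) (fun _ => Classical.propDecidable _) Finset.univ).filter
    fun p => dg R p = 2).card

lemma a2_odd (hR : IsSig2438Structure R) (c : Fin 8) :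
    a2 R c + 2 * ((@Finset.filter _ (fun p => R c p) (fun _ => Classical.propDecidable _)
      Finset.univ).filter fun p => ¬ dg R p = 2).card = 7 := by
  classical
  have h := sum_seven hR c
  set Sc := @Finset.filter _ (fun p => R c p) (fun _ => Classical.propDecidable _)
      Finset.univ with hSc
  rw [← Finset.sum_filter_add_sum_filter_not Sc (fun p => dg R p = 2)] at h
  have e1 : ∑ p ∈ Sc.filter (fun p => dg R p = 2), (dg R p - 1)
      = (Sc.filter (fun p => dg R p = 2)).card := by
    rw [Finset.card_eq_sum_ones]
    refine Finset.sum_congr rfl fun p hp => ?_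
    rw [Finset.mem_filter] at hp
    omega
  have e2 : ∑ p ∈ Sc.filter (fun p => ¬ dg R p = 2), (dg R p - 1)
      = 2 * (Sc.filter (fun p => ¬ dg R p = 2)).card := by
    have : ∀ p ∈ Sc.filter (fun p => ¬ dg R p = 2), dg R p - 1 = 2 := by
      intro p hp
      rw [Finset.mem_filter] at hp
      have := deg23 hR p
      omega
    rw [Finset.sum_congr rfl this, Finset.sum_const, smul_eq_mul, Nat.mul_comm]
  rw [e1, e2] at h
  exact h

lemma sum_a2 (hR : IsSig2438Structure R) : ∑ c : Fin 8, a2 R c = 8 := by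
  classical
  have key : ∀ c : Fin 8, a2 R c
      = ∑ p ∈ Finset.univ.filter (fun p => dg R p = 2), (if R c p then 1 else 0) := by
    intro c
    rw [a2, ← Finset.card_filter]
    congr 1
    ext p
    simp only [Finset.mem_filter, Finset.mem_univ, true_and]
    tauto
  rw [Finset.sum_congr rfl (fun c _ => key c), Finset.sum_comm]
  have inner : ∀ p ∈ Finset.univ.filter (fun p => dg R p = 2),
      ∑ c : Fin 8, (if R c p then 1 else 0) = 2 := by
    intro p hp
    rw [Finset.mem_filter] at hp
    rw [← Finset.card_filter]
    have : Finset.univ.filter (fun c => R c p) = blk R p := rfl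
    rw [this]
    exact hp.2
  rw [Finset.sum_congr rfl inner, Finset.sum_const, smul_eq_mul, hD2 hR]

lemma a2_one (hR : IsSig2438Structure R) (c : Fin 8) : a2 R c = 1 := by
  classical
  have hodd := fun c => a2_odd hR c
  have hge : ∀ c', 1 ≤ a2 R c' := by
    intro c'
    have := hodd c'
    omega
  have hsum := sum_a2 hR
  by_contra hne
  have h2 : 2 ≤ a2 R c := by
    have := hge c
    omega
  have hrest : 7 • 1 ≤ ∑ c' ∈ Finset.univ.erase c, a2 R c' := by
    have := Finset.card_nsmul_le_sum (Finset.univ.erase c) (a2 R) 1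
      (fun x _ => hge x)
    rwa [show (Finset.univ.erase c).card = 7 by
      rw [Finset.card_erase_of_mem (Finset.mem_univ c)]; rfl] at this
  have := Finset.sum_erase_add Finset.univ (a2 R) (Finset.mem_univ c)
  simp only [smul_eq_mul, mul_one] at hrest
  omega

lemma exP2 (hR : IsSig2438Structure R) (c : Fin 8) :
    ∃! p : Fin 12, R c p ∧ dg R p = 2 := by
  classical
  have h := a2_one hR c
  rw [a2, Finset.card_eq_one] at h
  obtain ⟨p, hp⟩ := h
  have hmem : ∀ q : Fin 12, q ∈ ((@Finset.filter _ (fun p => R c p)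
      (fun _ => Classical.propDecidable _) Finset.univ).filter
      fun p => dg R p = 2) ↔ (R c q ∧ dg R q = 2) := by
    intro q
    simp only [Finset.mem_filter, Finset.mem_univ, true_and]
  rw [hp] at hmem
  simp only [Finset.mem_singleton] at hmem
  exact ⟨p, (hmem p).mp rfl, fun q hq => (hmem q).mpr hq⟩

noncomputable def P2 (hR : IsSig2438Structure R) (c : Fin 8) : Fin 12 :=
  (exP2 hR c).exists.choose

lemma P2_mem (hR : IsSig2438Structure R) (c : Fin 8) :
    R c (P2 hR c) ∧ dg R (P2 hR c) = 2 := (exP2 hR c).exists.choose_spec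

lemma P2_uniq (hR : IsSig2438Structure R) {c : Fin 8} {q : Fin 12}
    (h1 : R c q) (h2 : dg R q = 2) : q = P2 hR c :=
  (exP2 hR c).unique ⟨h1, h2⟩ (P2_mem hR c)

lemma exM (hR : IsSig2438Structure R) (c : Fin 8) :
    ∃! c' : Fin 8, c' ≠ c ∧ R c' (P2 hR c) := by
  classical
  have h2 : (blk R (P2 hR c)).card = 2 := (P2_mem hR c).2
  obtain ⟨x, y, hxy, hs⟩ := Finset.card_eq_two.mp h2
  have hc : c ∈ blk R (P2 hR c) := (mem_blk R).mpr (P2_mem hR c).1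
  have hmem : ∀ w : Fin 8, R w (P2 hR c) ↔ (w = x ∨ w = y) := by
    intro w
    rw [← mem_blk R, hs]
    simp
  rw [hs] at hc
  simp only [Finset.mem_insert, Finset.mem_singleton] at hc
  rcases hc with rfl | rfl
  · exact ⟨y, ⟨hxy.symm, (hmem y).mpr (Or.inr rfl)⟩,
      fun w ⟨hw1, hw2⟩ => ((hmem w).mp hw2).resolve_left hw1⟩
  · exact ⟨x, ⟨hxy, (hmem x).mpr (Or.inl rfl)⟩,
      fun w ⟨hw1, hw2⟩ => ((hmem w).mp hw2).resolve_right hw1⟩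

noncomputable def mp (hR : IsSig2438Structure R) (c : Fin 8) : Fin 8 :=
  (exM hR c).exists.choose

lemma mp_ne (hR : IsSig2438Structure R) (c : Fin 8) : mp hR c ≠ c :=
  (exM hR c).exists.choose_spec.1

lemma mp_mem (hR : IsSig2438Structure R) (c : Fin 8) : R (mp hR c) (P2 hR c) :=
  (exM hR c).exists.choose_spec.2

lemma mp_uniq (hR : IsSig2438Structure R) {c c' : Fin 8} (h1 : c' ≠ c)
    (h2 : R c' (P2 hR c)) : c' = mp hR c :=
  (exM hR c).unique ⟨h1, h2⟩ ⟨mp_ne hR c, mp_mem hR c⟩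

lemma P2_mp (hR : IsSig2438Structure R) (c : Fin 8) : P2 hR (mp hR c) = P2 hR c :=
  (P2_uniq hR (mp_mem hR c) (P2_mem hR c).2).symm

lemma mp_invol (hR : IsSig2438Structure R) (c : Fin 8) : mp hR (mp hR c) = c := by
  have h := mp_uniq hR (c := mp hR c) (mp_ne hR c).symm (by
    rw [P2_mp hR c]; exact (P2_mem hR c).1)
  exact h.symm

lemma mp_inj (hR : IsSig2438Structure R) {c c' : Fin 8} (h : mp hR c = mp hR c') :
    c = c' := by
  have := congrArg (mp hR) h
  rwa [mp_invol, mp_invol] at this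

lemma pair_deg2 (hR : IsSig2438Structure R) {x y : Fin 8} {p : Fin 12}
    (hx : R x p) (hy : R y p) (hne : y ≠ x) (h2 : dg R p = 2) : y = mp hR x := by
  have hp : p = P2 hR x := P2_uniq hR hx h2
  exact mp_uniq hR hne (hp ▸ hy)

lemma blk_P2 (hR : IsSig2438Structure R) (c : Fin 8) :
    blk R (P2 hR c) = {c, mp hR c} := by
  classical
  have h2 : (blk R (P2 hR c)).card = 2 := (P2_mem hR c).2
  have hsub : {c, mp hR c} ⊆ blk R (P2 hR c) := by
    intro w hw
    simp only [Finset.mem_insert, Finset.mem_singleton] at hw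
    rw [mem_blk]
    rcases hw with h | h <;> rw [h]
    · exact (P2_mem hR c).1
    · exact mp_mem hR c
  have hcard : ({c, mp hR c} : Finset (Fin 8)).card = 2 := by
    rw [Finset.card_pair (mp_ne hR c).symm]
  exact (Finset.eq_of_subset_of_card_le hsub (by omega)).symm

lemma deg_F3 (hR : IsSig2438Structure R) {x y : Fin 8} (h1 : y ≠ x) (h2 : y ≠ mp hR x) :
    dg R (Fpt hR x y) = 3 := by
  rcases deg23 hR (Fpt hR x y) with h | h
  · exact absurd (pair_deg2 hR (Fpt_mem hR (Ne.symm h1)).1 (Fpt_mem hR (Ne.symm h1)).2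
      h1 h) h2
  · exact h

lemma ex_third (hR : IsSig2438Structure R) :
    ∀ x y : Fin 8, ∃ z : Fin 8, y ≠ x → y ≠ mp hR x →
      (R z (Fpt hR x y) ∧ z ≠ x ∧ z ≠ y ∧
        ∀ w, R w (Fpt hR x y) → w = x ∨ w = y ∨ w = z) := by
  classical
  intro x y
  by_cases h1 : y ≠ x
  · by_cases h2 : y ≠ mp hR x
    · have h3 : (blk R (Fpt hR x y)).card = 3 := deg_F3 hR h1 h2
      obtain ⟨u, v, w, huv, huw, hvw, hs⟩ := Finset.card_eq_three.mp h3
      have hx : x ∈ ({u, v, w} : Finset (Fin 8)) := by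
        rw [← hs]; exact (mem_blk R).mpr (Fpt_mem hR (Ne.symm h1)).1
      have hy : y ∈ ({u, v, w} : Finset (Fin 8)) := by
        rw [← hs]; exact (mem_blk R).mpr (Fpt_mem hR (Ne.symm h1)).2
      have hall : ∀ a, R a (Fpt hR x y) ↔ (a = u ∨ a = v ∨ a = w) := by
        intro a
        rw [← mem_blk R (p := Fpt hR x y), hs]
        simp
      simp only [Finset.mem_insert, Finset.mem_singleton] at hx hy
      rcases hx with rfl | rfl | rfl <;> rcases hy with rfl | rfl | rfl <;>
      first
      | exact absurd rfl h1
      | exact ⟨w, fun _ _ => ⟨(hall w).mpr (by tauto), by tauto, by tauto,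
          fun a ha => by have := (hall a).mp ha; tauto⟩⟩
      | exact ⟨v, fun _ _ => ⟨(hall v).mpr (by tauto), by tauto, by tauto,
          fun a ha => by have := (hall a).mp ha; tauto⟩⟩
      | exact ⟨u, fun _ _ => ⟨(hall u).mpr (by tauto), by tauto, by tauto,
          fun a ha => by have := (hall a).mp ha; tauto⟩⟩
    · exact ⟨0, fun _ hc => absurd h2 (by tauto)⟩
  · exact ⟨0, fun hc _ => absurd hc h1⟩

noncomputable def tp (hR : IsSig2438Structure R) (x y : Fin 8) : Fin 8 :=
  (ex_third hR x y).choose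

lemma tp_spec (hR : IsSig2438Structure R) {x y : Fin 8} (h1 : y ≠ x) (h2 : y ≠ mp hR x) :
    R (tp hR x y) (Fpt hR x y) ∧ tp hR x y ≠ x ∧ tp hR x y ≠ y ∧
      ∀ w, R w (Fpt hR x y) → w = x ∨ w = y ∨ w = tp hR x y :=
  (ex_third hR x y).choose_spec h1 h2

lemma mp_flip (hR : IsSig2438Structure R) {x y : Fin 8} (h2 : y ≠ mp hR x) :
    x ≠ mp hR y := by
  intro h
  apply h2
  rw [h, mp_invol]

lemma tp_ne_mx (hR : IsSig2438Structure R) {x y : Fin 8} (h1 : y ≠ x) (h2 : y ≠ mp hR x) :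
    tp hR x y ≠ mp hR x := by
  intro h
  have hmem : R (mp hR x) (Fpt hR x y) := h ▸ (tp_spec hR h1 h2).1
  have hx : R x (Fpt hR x y) := (Fpt_mem hR (Ne.symm h1)).1
  -- the pair {x, mp x} lies in two distinct points
  obtain ⟨q, hq, huq⟩ := hR.1 x (mp hR x) (Ne.symm (mp_ne hR x))
  have e1 := huq _ ⟨hx, hmem⟩
  have e2 := huq _ ⟨(P2_mem hR x).1, mp_mem hR x⟩
  have : dg R (Fpt hR x y) = 2 := by
    rw [e1.trans e2.symm]; exact (P2_mem hR x).2
  rw [deg_F3 hR h1 h2] at this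
  omega

lemma tp_ne_my (hR : IsSig2438Structure R) {x y : Fin 8} (h1 : y ≠ x) (h2 : y ≠ mp hR x) :
    tp hR x y ≠ mp hR y := by
  intro h
  have hmem : R (mp hR y) (Fpt hR x y) := h ▸ (tp_spec hR h1 h2).1
  have hy : R y (Fpt hR x y) := (Fpt_mem hR (Ne.symm h1)).2
  obtain ⟨q, hq, huq⟩ := hR.1 y (mp hR y) (Ne.symm (mp_ne hR y))
  have e1 := huq _ ⟨hy, hmem⟩
  have e2 := huq _ ⟨(P2_mem hR y).1, mp_mem hR y⟩
  have : dg R (Fpt hR x y) = 2 := by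
    rw [e1.trans e2.symm]; exact (P2_mem hR y).2
  rw [deg_F3 hR h1 h2] at this
  omega

lemma Fpt_tp (hR : IsSig2438Structure R) {x y : Fin 8} (h1 : y ≠ x) (h2 : y ≠ mp hR x) :
    Fpt hR x (tp hR x y) = Fpt hR x y := by
  exact (Fpt_uniq hR (Ne.symm (tp_spec hR h1 h2).2.1) (Fpt_mem hR (Ne.symm h1)).1
    (tp_spec hR h1 h2).1).symm

lemma tp_flip (hR : IsSig2438Structure R) {x y : Fin 8} (h1 : y ≠ x) (h2 : y ≠ mp hR x) :
    tp hR x (tp hR x y) = y := by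
  have hs := tp_spec hR h1 h2
  have h1' : tp hR x y ≠ x := hs.2.1
  have h2' : tp hR x y ≠ mp hR x := tp_ne_mx hR h1 h2
  have hs' := tp_spec hR h1' h2'
  have hmem : R (tp hR x (tp hR x y)) (Fpt hR x y) := by
    have := hs'.1
    rwa [Fpt_tp hR h1 h2] at this
  rcases hs.2.2.2 _ hmem with h | h | h
  · exact absurd h hs'.2.1
  · exact h
  · exact absurd h hs'.2.2.1

lemma tp_symm (hR : IsSig2438Structure R) {x y : Fin 8} (h1 : y ≠ x) (h2 : y ≠ mp hR x) :
    tp hR y x = tp hR x y := by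
  have h2' : x ≠ mp hR y := mp_flip hR h2
  have hs' := tp_spec hR (Ne.symm h1) h2'
  have hmem : R (tp hR y x) (Fpt hR x y) := by
    have := hs'.1
    rwa [Fpt_symm hR (Ne.symm h1)] at this
  rcases (tp_spec hR h1 h2).2.2.2 _ hmem with h | h | h
  · exact absurd h hs'.2.2.1
  · exact absurd h hs'.2.1
  · exact h

lemma tp_inj (hR : IsSig2438Structure R) {x u v : Fin 8} (hu1 : u ≠ x) (hu2 : u ≠ mp hR x)
    (hv1 : v ≠ x) (hv2 : v ≠ mp hR x) (h : tp hR x u = tp hR x v) : u = v := by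
  have := tp_flip hR hu1 hu2
  rw [h, tp_flip hR hv1 hv2] at this
  exact this.symm

lemma blk_Fpt (hR : IsSig2438Structure R) {x y : Fin 8} (h1 : y ≠ x) (h2 : y ≠ mp hR x) :
    blk R (Fpt hR x y) = {x, y, tp hR x y} := by
  classical
  have hs := tp_spec hR h1 h2
  ext w
  rw [mem_blk]
  simp only [Finset.mem_insert, Finset.mem_singleton]
  constructor
  · exact hs.2.2.2 w
  · rintro (rfl | rfl | rfl)
    · exact (Fpt_mem hR (Ne.symm h1)).1
    · exact (Fpt_mem hR (Ne.symm h1)).2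
    · exact hs.1

lemma tp_ne_of (hR : IsSig2438Structure R) {x y z z' : Fin 8}
    (hy1 : y ≠ x) (hy2 : y ≠ mp hR x) (hz1 : z ≠ x) (hz2 : z ≠ mp hR x)
    (hzz : tp hR x z = z') (hne : z' ≠ y) : tp hR x y ≠ z := by
  intro h
  have hf := tp_flip hR hy1 hy2
  rw [h, hzz] at hf
  exact hne hf

lemma mp_ne_of_ne_mp (hR : IsSig2438Structure R) {x y : Fin 8} (h : x ≠ mp hR y) :
    mp hR x ≠ y := fun hc => h (by rw [← hc, mp_invol])

theorem iso0 (hR : IsSig2438Structure R) :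
    ∃ (e : Fin 8 ≃ Fin 8) (f : Fin 12 ≃ Fin 12), ∀ c p, R0 c p ↔ R (e c) (f p) := by
  classical
  obtain ⟨A, hA⟩ : ∃ A, mp hR 0 = A := ⟨_, rfl⟩
  have nA0 : A ≠ 0 := hA ▸ mp_ne hR 0
  have hmA : mp hR A = 0 := by rw [← hA, mp_invol]
  obtain ⟨b, hb0, hbA⟩ : ∃ b : Fin 8, b ≠ 0 ∧ b ≠ A := by
    by_cases h : A = 1
    · exact ⟨2, by decide, by rw [h]; decide⟩
    · exact ⟨1, by decide, fun hc => h hc.symm⟩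
  obtain ⟨B, hmb⟩ : ∃ B, mp hR b = B := ⟨_, rfl⟩
  have hmB : mp hR B = b := by rw [← hmb, mp_invol]
  have nBb : B ≠ b := hmb ▸ mp_ne hR b
  have nB0 : B ≠ 0 := by
    intro hc
    exact hbA (by rw [← hmB, hc, hA])
  have nBA : B ≠ A := by
    intro hc
    exact hb0 (by rw [← hmB, hc, hmA])
  -- side conditions for tp hR 0 b
  have sb : b ≠ mp hR 0 := by rw [hA]; exact hbA
  obtain ⟨c1, hc1⟩ : ∃ c1, tp hR 0 b = c1 := ⟨_, rfl⟩
  have hsb := tp_spec hR hb0 sb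
  have nc0 : c1 ≠ 0 := hc1 ▸ hsb.2.1
  have ncb : c1 ≠ b := hc1 ▸ hsb.2.2.1
  have ncA : c1 ≠ A := by rw [← hc1, ← hA]; exact tp_ne_mx hR hb0 sb
  have ncB : c1 ≠ B := by rw [← hc1, ← hmb]; exact tp_ne_my hR hb0 sb
  obtain ⟨C1, hmc⟩ : ∃ C1, mp hR c1 = C1 := ⟨_, rfl⟩
  have hmC : mp hR C1 = c1 := by rw [← hmc, mp_invol]
  have nCc : C1 ≠ c1 := hmc ▸ mp_ne hR c1
  have nC0 : C1 ≠ 0 := by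
    intro hc
    exact ncA (by rw [← hmC, hc, hA])
  have nCA : C1 ≠ A := by
    intro hc
    exact nc0 (by rw [← hmC, hc, hmA])
  have nCb : C1 ≠ b := by
    intro hc
    exact ncB (by rw [← hmC, hc, hmb])
  have nCB : C1 ≠ B := by
    intro hc
    exact ncb (by rw [← hmC, hc, hmB])
  -- side conditions for tp hR 0 B
  have sB : B ≠ mp hR 0 := by rw [hA]; exact nBA
  obtain ⟨d1, hd1⟩ : ∃ d1, tp hR 0 B = d1 := ⟨_, rfl⟩
  have hsB := tp_spec hR nB0 sB
  have nd0 : d1 ≠ 0 := hd1 ▸ hsB.2.1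
  have ndB : d1 ≠ B := hd1 ▸ hsB.2.2.1
  have ndA : d1 ≠ A := by rw [← hd1, ← hA]; exact tp_ne_mx hR nB0 sB
  have ndb : d1 ≠ b := by rw [← hd1, ← hmB]; exact tp_ne_my hR nB0 sB
  have ndc : d1 ≠ c1 := by
    intro hc
    exact nBb (tp_inj hR nB0 sB hb0 sb (by rw [hd1, hc1, hc]))
  -- flips
  have fl_c : tp hR 0 c1 = b := by rw [← hc1]; exact tp_flip hR hb0 sb
  have fl_d : tp hR 0 d1 = B := by rw [← hd1]; exact tp_flip hR nB0 sB
  -- the hard inequality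
  have ndC : d1 ≠ C1 := by
    intro h
    -- S6 is the set of six known elements
    set S6 : Finset (Fin 8) := {0, A, b, B, c1, C1} with hS6
    have card6 : S6.card = 6 := by
      rw [hS6]
      rw [Finset.card_insert_of_notMem (by
        simp only [Finset.mem_insert, Finset.mem_singleton]; push_neg
        exact ⟨Ne.symm nA0, Ne.symm hb0, Ne.symm nB0, Ne.symm nc0, Ne.symm nC0⟩)]
      rw [Finset.card_insert_of_notMem (by
        simp only [Finset.mem_insert, Finset.mem_singleton]; push_neg
        exact ⟨Ne.symm hbA, Ne.symm nBA, Ne.symm ncA, Ne.symm nCA⟩)]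
      rw [Finset.card_insert_of_notMem (by
        simp only [Finset.mem_insert, Finset.mem_singleton]; push_neg
        exact ⟨Ne.symm nBb, Ne.symm ncb, Ne.symm nCb⟩)]
      rw [Finset.card_insert_of_notMem (by
        simp only [Finset.mem_insert, Finset.mem_singleton]; push_neg
        exact ⟨Ne.symm ncB, Ne.symm nCB⟩)]
      rw [Finset.card_insert_of_notMem (by
        simp only [Finset.mem_singleton]; exact Ne.symm nCc)]
      rfl
    have hE : (Finset.univ \ S6).card = 2 := by
      rw [Finset.card_sdiff_of_subset (Finset.subset_univ _), card6]
      rfl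
    have hEne : (Finset.univ \ S6).Nonempty := by
      rw [← Finset.card_pos, hE]; omega
    obtain ⟨gx, hgxE⟩ := hEne
    have hgxS : gx ∉ S6 := (Finset.mem_sdiff.mp hgxE).2
    rw [hS6] at hgxS
    simp only [Finset.mem_insert, Finset.mem_singleton] at hgxS
    push_neg at hgxS
    obtain ⟨ng0, ngA, ngb, ngB, ngc, ngC⟩ := hgxS
    have hmgxS : mp hR gx ∉ S6 := by
      rw [hS6]
      simp only [Finset.mem_insert, Finset.mem_singleton]
      push_neg
      refine ⟨?_, ?_, ?_, ?_, ?_, ?_⟩ <;> intro hm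
      · exact ngA (by rw [← mp_invol hR gx, hm, hA])
      · exact ng0 (by rw [← mp_invol hR gx, hm, hmA])
      · exact ngB (by rw [← mp_invol hR gx, hm, hmb])
      · exact ngb (by rw [← mp_invol hR gx, hm, hmB])
      · exact ngC (by rw [← mp_invol hR gx, hm, hmc])
      · exact ngc (by rw [← mp_invol hR gx, hm, hmC])
    have hpair : Finset.univ \ S6 = {gx, mp hR gx} := by
      refine (Finset.eq_of_subset_of_card_le ?_ ?_).symm
      · intro w hw
        simp only [Finset.mem_insert, Finset.mem_singleton] at hw
        rcases hw with rfl | rfl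
        · exact hgxE
        · exact Finset.mem_sdiff.mpr ⟨Finset.mem_univ _, hmgxS⟩
      · rw [hE, Finset.card_pair (mp_ne hR gx).symm]
    -- now consider tp hR 0 gx
    have sgx : gx ≠ mp hR 0 := by rw [hA]; exact ngA
    have hw := tp_spec hR ng0 sgx
    set w := tp hR 0 gx with hwdef
    have hw0 : w ≠ 0 := hw.2.1
    have hwgx : w ≠ gx := hw.2.2.1
    have hwA : w ≠ A := by rw [hwdef, ← hA]; exact tp_ne_mx hR ng0 sgx
    have hwmgx : w ≠ mp hR gx := by rw [hwdef]; exact tp_ne_my hR ng0 sgx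
    have hwb : w ≠ b := tp_ne_of hR ng0 sgx hb0 sb hc1 (Ne.symm ngc)
    have hwc : w ≠ c1 := tp_ne_of hR ng0 sgx nc0 (by rw [hA]; exact ncA) fl_c
      (Ne.symm ngb)
    have hwB : w ≠ B := tp_ne_of hR ng0 sgx nB0 sB (by rw [hd1, h]) (Ne.symm ngC)
    have hwC : w ≠ C1 := by
      have hflC : tp hR 0 C1 = B := by
        have : tp hR 0 (tp hR 0 B) = B := tp_flip hR nB0 sB
        rwa [hd1, h] at this
      exact tp_ne_of hR ng0 sgx nC0 (by rw [hA]; exact nCA) hflC (Ne.symm ngB)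
    have hwE : w ∈ Finset.univ \ S6 := by
      refine Finset.mem_sdiff.mpr ⟨Finset.mem_univ _, ?_⟩
      rw [hS6]
      simp only [Finset.mem_insert, Finset.mem_singleton]
      push_neg
      exact ⟨hw0, hwA, hwb, hwB, hwc, hwC⟩
    rw [hpair] at hwE
    simp only [Finset.mem_insert, Finset.mem_singleton] at hwE
    rcases hwE with h' | h'
    · exact hwgx h'
    · exact hwmgx h' 
  obtain ⟨D1, hmd⟩ : ∃ D1, mp hR d1 = D1 := ⟨_, rfl⟩
  have hmD : mp hR D1 = d1 := by rw [← hmd, mp_invol]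
  have nDd : D1 ≠ d1 := hmd ▸ mp_ne hR d1
  have nD0 : D1 ≠ 0 := fun hc => ndA (by rw [← hmD, hc, hA])
  have nDA : D1 ≠ A := fun hc => nd0 (by rw [← hmD, hc, hmA])
  have nDb : D1 ≠ b := fun hc => ndB (by rw [← hmD, hc, hmb])
  have nDB : D1 ≠ B := fun hc => ndb (by rw [← hmD, hc, hmB])
  have nDc : D1 ≠ c1 := fun hc => ndC (by rw [← hmD, hc, hmc])
  have nDC : D1 ≠ C1 := fun hc => ndc (by rw [← hmD, hc, hmC])
  -- all eight elements
  have hcard8 : ({0, A, b, B, c1, C1, d1, D1} : Finset (Fin 8)).card = 8 := by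
    rw [Finset.card_insert_of_notMem (by
      simp only [Finset.mem_insert, Finset.mem_singleton]; push_neg
      exact ⟨Ne.symm nA0, Ne.symm hb0, Ne.symm nB0, Ne.symm nc0, Ne.symm nC0,
        Ne.symm nd0, Ne.symm nD0⟩)]
    rw [Finset.card_insert_of_notMem (by
      simp only [Finset.mem_insert, Finset.mem_singleton]; push_neg
      exact ⟨Ne.symm hbA, Ne.symm nBA, Ne.symm ncA, Ne.symm nCA, Ne.symm ndA,
        Ne.symm nDA⟩)]
    rw [Finset.card_insert_of_notMem (by
      simp only [Finset.mem_insert, Finset.mem_singleton]; push_neg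
      exact ⟨Ne.symm nBb, Ne.symm ncb, Ne.symm nCb, Ne.symm ndb, Ne.symm nDb⟩)]
    rw [Finset.card_insert_of_notMem (by
      simp only [Finset.mem_insert, Finset.mem_singleton]; push_neg
      exact ⟨Ne.symm ncB, Ne.symm nCB, Ne.symm ndB, Ne.symm nDB⟩)]
    rw [Finset.card_insert_of_notMem (by
      simp only [Finset.mem_insert, Finset.mem_singleton]; push_neg
      exact ⟨Ne.symm nCc, Ne.symm ndc, Ne.symm nDc⟩)]
    rw [Finset.card_insert_of_notMem (by
      simp only [Finset.mem_insert, Finset.mem_singleton]; push_neg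
      exact ⟨Ne.symm ndC, Ne.symm nDC⟩)]
    rw [Finset.card_insert_of_notMem (by
      simp only [Finset.mem_singleton]; exact Ne.symm nDd)]
    rfl
  have hall : ∀ x : Fin 8, x = 0 ∨ x = A ∨ x = b ∨ x = B ∨ x = c1 ∨ x = C1 ∨
      x = d1 ∨ x = D1 := by
    intro x
    have hx : x ∈ ({0, A, b, B, c1, C1, d1, D1} : Finset (Fin 8)) := by
      rw [Finset.eq_univ_of_card _ hcard8]
      exact Finset.mem_univ x
    simpa only [Finset.mem_insert, Finset.mem_singleton] using hx
  set g : Fin 8 → Fin 8 := ![0, A, b, B, c1, C1, d1, D1] with hg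
  have gsurj : Function.Surjective g := by
    intro y
    rw [hg]
    rcases hall y with h|h|h|h|h|h|h|h
    exacts [⟨0, h.symm⟩, ⟨1, h.symm⟩, ⟨2, h.symm⟩, ⟨3, h.symm⟩, ⟨4, h.symm⟩,
      ⟨5, h.symm⟩, ⟨6, h.symm⟩, ⟨7, h.symm⟩]
  have gbij : Function.Bijective g := Finite.surjective_iff_bijective.mp gsurj
  have ginj : Function.Injective g := gbij.1
  -- values of g
  have g0 : g 0 = 0 := by rw [hg]; rfl
  have g1 : g 1 = A := by rw [hg]; rfl
  have g2 : g 2 = b := by rw [hg]; rfl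
  have g3 : g 3 = B := by rw [hg]; rfl
  have g4 : g 4 = c1 := by rw [hg]; rfl
  have g5 : g 5 = C1 := by rw [hg]; rfl
  have g6 : g 6 = d1 := by rw [hg]; rfl
  have g7 : g 7 = D1 := by rw [hg]; rfl
  -- auxiliary t-values
  have s0b : (0 : Fin 8) ≠ mp hR b := by rw [hmb]; exact Ne.symm nB0
  have tb0 : tp hR b 0 = c1 := by rw [← hc1]; exact tp_symm hR hb0 sb
  have tbc : tp hR b c1 = 0 := by
    have := tp_flip hR (Ne.symm hb0) s0b
    rwa [tb0] at this
  have scb : c1 ≠ mp hR b := by rw [hmb]; exact ncB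
  have s0B : (0 : Fin 8) ≠ mp hR B := by rw [hmB]; exact Ne.symm hb0
  have tB0 : tp hR B 0 = d1 := by rw [← hd1]; exact tp_symm hR nB0 sB
  have tBd : tp hR B d1 = 0 := by
    have := tp_flip hR (Ne.symm nB0) s0B
    rwa [tB0] at this
  -- k3 : tp 0 C1 = D1
  have sC0 : C1 ≠ mp hR 0 := by rw [hA]; exact nCA
  have hk3s := tp_spec hR nC0 sC0
  have k3 : tp hR 0 C1 = D1 := by
    rcases hall (tp hR 0 C1) with h|h|h|h|h|h|h|h
    · exact absurd h hk3s.2.1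
    · exact absurd h (by rw [← hA]; exact tp_ne_mx hR nC0 sC0)
    · exact absurd h (tp_ne_of hR nC0 sC0 hb0 sb hc1 (Ne.symm nCc))
    · exact absurd h (tp_ne_of hR nC0 sC0 nB0 sB hd1 ndC)
    · exact absurd h (by rw [← hmC]; exact tp_ne_my hR nC0 sC0)
    · exact absurd h hk3s.2.2.1
    · exact absurd h (tp_ne_of hR nC0 sC0 nd0 (by rw [hA]; exact ndA) fl_d
        (Ne.symm nCB))
    · exact h
  have tC0 : tp hR C1 0 = D1 := by rw [← k3]; exact tp_symm hR nC0 sC0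
  have s0C : (0 : Fin 8) ≠ mp hR C1 := by rw [hmC]; exact Ne.symm nc0
  have tCD : tp hR C1 D1 = 0 := by
    have := tp_flip hR (Ne.symm nC0) s0C
    rwa [tC0] at this
  -- k4 : tp b A = D1
  have sAb : A ≠ b := Ne.symm hbA
  have sAmb : A ≠ mp hR b := by rw [hmb]; exact Ne.symm nBA
  have hk4s := tp_spec hR sAb sAmb
  have sdb : d1 ≠ mp hR b := by rw [hmb]; exact ndB
  have sCb : C1 ≠ mp hR b := by rw [hmb]; exact nCB
  have k4 : tp hR b A = D1 := by
    rcases hall (tp hR b A) with h|h|h|h|h|h|h|h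
    · exact absurd h (by rw [← hmA]; exact tp_ne_my hR sAb sAmb)
    · exact absurd h hk4s.2.2.1
    · exact absurd h hk4s.2.1
    · exact absurd h (by rw [← hmb]; exact tp_ne_mx hR sAb sAmb)
    · exact absurd h (tp_ne_of hR sAb sAmb ncb scb tbc (Ne.symm nA0))
    · -- subargument 1 : tp b A = C1 is impossible
      exfalso
      have hbC : tp hR b C1 = A := by
        have := tp_flip hR sAb sAmb
        rwa [h] at this
      have hk := tp_spec hR ndb sdb
      rcases hall (tp hR b d1) with h'|h'|h'|h'|h'|h'|h'|h'
      · exact (tp_ne_of hR ndb sdb (Ne.symm hb0) s0b tb0 (Ne.symm ndc)) h'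
      · exact (tp_ne_of hR ndb sdb sAb sAmb h (Ne.symm ndC)) h'
      · exact hk.2.1 h'
      · exact absurd h' (by rw [← hmb]; exact tp_ne_mx hR ndb sdb)
      · exact (tp_ne_of hR ndb sdb ncb scb tbc (Ne.symm nd0)) h'
      · exact (tp_ne_of hR ndb sdb nCb sCb hbC (Ne.symm ndA)) h'
      · exact hk.2.2.1 h'
      · exact absurd h' (by rw [← hmd]; exact tp_ne_my hR ndb sdb)
    · -- subargument 2 : tp b A = d1 is impossible
      exfalso
      have hk := tp_spec hR nCb sCb
      rcases hall (tp hR b C1) with h'|h'|h'|h'|h'|h'|h'|h'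
      · exact (tp_ne_of hR nCb sCb (Ne.symm hb0) s0b tb0 (Ne.symm nCc)) h'
      · exact (tp_ne_of hR nCb sCb sAb sAmb h ndC) h'
      · exact hk.2.1 h'
      · exact absurd h' (by rw [← hmb]; exact tp_ne_mx hR nCb sCb)
      · exact absurd h' (by rw [← hmC]; exact tp_ne_my hR nCb sCb)
      · exact hk.2.2.1 h'
      · exact (tp_ne_of hR nCb sCb ndb sdb (by
          have := tp_flip hR sAb sAmb
          rwa [h] at this) (Ne.symm nCA)) h'
      · -- tp b C1 = D1 contradicts tp C1 D1 = 0
        have hsym : tp hR C1 b = D1 := by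
          rw [← h']; exact tp_symm hR nCb sCb
        have hbc1 : b ≠ mp hR C1 := by rw [hmC]; exact Ne.symm ncb
        have := tp_flip hR (Ne.symm nCb) hbc1
        rw [hsym, tCD] at this
        exact hb0 this.symm
    · exact h
  have tAb : tp hR A b = D1 := by rw [← k4]; exact tp_symm hR sAb sAmb
  have tbD : tp hR b D1 = A := by
    have := tp_flip hR sAb sAmb
    rwa [k4] at this
  have sbA : b ≠ mp hR A := by rw [hmA]; exact hb0
  have tAD : tp hR A D1 = b := by
    have := tp_flip hR hbA sbA
    rwa [tAb] at this
  -- k5 : tp b C1 = d1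
  have hk5s := tp_spec hR nCb sCb
  have sDb : D1 ≠ mp hR b := by rw [hmb]; exact nDB
  have k5 : tp hR b C1 = d1 := by
    rcases hall (tp hR b C1) with h|h|h|h|h|h|h|h
    · exact absurd h (tp_ne_of hR nCb sCb (Ne.symm hb0) s0b tb0 (Ne.symm nCc))
    · exact absurd h (tp_ne_of hR nCb sCb sAb sAmb k4 nDC)
    · exact absurd h hk5s.2.1
    · exact absurd h (by rw [← hmb]; exact tp_ne_mx hR nCb sCb)
    · exact absurd h (by rw [← hmC]; exact tp_ne_my hR nCb sCb)
    · exact absurd h hk5s.2.2.1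
    · exact h
    · exact absurd h (tp_ne_of hR nCb sCb nDb sDb tbD (Ne.symm nCA))
  -- k6 : tp A B = C1
  have sBA : B ≠ A := nBA
  have sBmA : B ≠ mp hR A := by rw [hmA]; exact nB0
  have hk6s := tp_spec hR sBA sBmA
  have scA : c1 ≠ mp hR A := by rw [hmA]; exact nc0
  have sDA : D1 ≠ mp hR A := by rw [hmA]; exact nD0
  have sdc : d1 ≠ mp hR c1 := by rw [hmc]; exact ndC
  have s0c : (0 : Fin 8) ≠ mp hR c1 := by rw [hmc]; exact Ne.symm nC0
  have tc0 : tp hR c1 0 = b := by rw [← fl_c]; exact tp_symm hR nc0 (by rw [hA]; exact ncA)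
  have tcb : tp hR c1 b = 0 := by
    have := tp_flip hR (Ne.symm nc0) s0c
    rwa [tc0] at this
  have sbc : b ≠ mp hR c1 := by rw [hmc]; exact Ne.symm nCb
  have sAc : A ≠ mp hR c1 := by rw [hmc]; exact Ne.symm nCA
  have k6 : tp hR A B = C1 := by
    rcases hall (tp hR A B) with h|h|h|h|h|h|h|h
    · exact absurd h (by rw [← hmA]; exact tp_ne_mx hR sBA sBmA)
    · exact absurd h hk6s.2.1
    · exact absurd h (by rw [← hmB]; exact tp_ne_my hR sBA sBmA)
    · exact absurd h hk6s.2.2.1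
    · -- subargument 3 : tp A B = c1 is impossible
      exfalso
      have hAc : tp hR A c1 = B := by
        have := tp_flip hR sBA sBmA
        rwa [h] at this
      have hcA : tp hR c1 A = B := by rw [← hAc]; exact tp_symm hR ncA scA
      have hcB : tp hR c1 B = A := by
        have := tp_flip hR (Ne.symm ncA) sAc
        rwa [hcA] at this
      have hk := tp_spec hR ndc sdc
      rcases hall (tp hR c1 d1) with h'|h'|h'|h'|h'|h'|h'|h'
      · exact (tp_ne_of hR ndc sdc (Ne.symm nc0) s0c tc0 (Ne.symm ndb)) h'
      · exact (tp_ne_of hR ndc sdc (Ne.symm ncA) sAc hcA (Ne.symm ndB)) h'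
      · exact (tp_ne_of hR ndc sdc (Ne.symm ncb) sbc tcb (Ne.symm nd0)) h'
      · exact (tp_ne_of hR ndc sdc (Ne.symm ncB)
          (by rw [hmc]; exact Ne.symm nCB) hcB (Ne.symm ndA)) h'
      · exact hk.2.1 h'
      · exact absurd h' (by rw [← hmc]; exact tp_ne_mx hR ndc sdc)
      · exact hk.2.2.1 h'
      · exact absurd h' (by rw [← hmd]; exact tp_ne_my hR ndc sdc)
    · exact h
    · -- subargument 4 : tp A B = d1 is impossible
      exfalso
      have hAd : tp hR A d1 = B := by
        have := tp_flip hR sBA sBmA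
        rwa [h] at this
      have hdA : tp hR d1 A = B := by
        rw [← hAd]
        exact tp_symm hR ndA (by rw [hmA]; exact nd0)
      have hd0 : tp hR d1 0 = B := by
        rw [← fl_d]
        exact tp_symm hR nd0 (by rw [hA]; exact ndA)
      have sAd : A ≠ mp hR d1 := by rw [hmd]; exact Ne.symm nDA
      have s0d : (0 : Fin 8) ≠ mp hR d1 := by rw [hmd]; exact Ne.symm nD0
      exact nA0 (tp_inj hR (Ne.symm ndA) sAd (Ne.symm nd0) s0d (hdA.trans hd0.symm))
    · exact absurd h (tp_ne_of hR sBA sBmA nDA sDA tAD (Ne.symm nBb))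
  -- k7 : tp A c1 = d1
  have hk7s := tp_spec hR ncA scA
  have k7 : tp hR A c1 = d1 := by
    rcases hall (tp hR A c1) with h|h|h|h|h|h|h|h
    · exact absurd h (by rw [← hmA]; exact tp_ne_mx hR ncA scA)
    · exact absurd h hk7s.2.1
    · exact absurd h (tp_ne_of hR ncA scA hbA sbA tAb nDc)
    · exact absurd h (tp_ne_of hR ncA scA sBA sBmA k6 nCc)
    · exact absurd h hk7s.2.2.1
    · exact absurd h (by rw [← hmc]; exact tp_ne_my hR ncA scA)
    · exact h
    · exact absurd h (tp_ne_of hR ncA scA nDA sDA tAD (Ne.symm ncb))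
  -- k8 : tp B c1 = D1
  have scB : c1 ≠ mp hR B := by rw [hmB]; exact ncb
  have hk8s := tp_spec hR ncB scB
  have tBA : tp hR B A = C1 := by rw [← k6]; exact tp_symm hR sBA sBmA
  have k8 : tp hR B c1 = D1 := by
    rcases hall (tp hR B c1) with h|h|h|h|h|h|h|h
    · exact absurd h (tp_ne_of hR ncB scB (Ne.symm nB0) s0B tB0 ndc)
    · exact absurd h (tp_ne_of hR ncB scB (Ne.symm nBA)
        (by rw [hmB]; exact Ne.symm hbA) tBA nCc)
    · exact absurd h (by rw [← hmB]; exact tp_ne_mx hR ncB scB)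
    · exact absurd h hk8s.2.1
    · exact absurd h hk8s.2.2.1
    · exact absurd h (by rw [← hmc]; exact tp_ne_my hR ncB scB)
    · exact absurd h (tp_ne_of hR ncB scB ndB (by rw [hmB]; exact ndb) tBd
        (Ne.symm nc0))
    · exact h
  -- blocks of R
  have blkP0 : blk R (P2 hR 0) = {0, A} := by rw [blk_P2 hR 0, hA]
  have blkPb : blk R (P2 hR b) = {b, B} := by rw [blk_P2 hR b, hmb]
  have blkPc : blk R (P2 hR c1) = {c1, C1} := by rw [blk_P2 hR c1, hmc]
  have blkPd : blk R (P2 hR d1) = {d1, D1} := by rw [blk_P2 hR d1, hmd]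
  have blkF0b : blk R (Fpt hR 0 b) = {0, b, c1} := by rw [blk_Fpt hR hb0 sb, hc1]
  have blkFAB : blk R (Fpt hR A B) = {A, B, C1} := by rw [blk_Fpt hR sBA sBmA, k6]
  have blkF0B : blk R (Fpt hR 0 B) = {0, B, d1} := by rw [blk_Fpt hR nB0 sB, hd1]
  have blkFbA : blk R (Fpt hR b A) = {b, A, D1} := by rw [blk_Fpt hR sAb sAmb, k4]
  have blkF0C : blk R (Fpt hR 0 C1) = {0, C1, D1} := by rw [blk_Fpt hR nC0 sC0, k3]
  have blkFAc : blk R (Fpt hR A c1) = {A, c1, d1} := by rw [blk_Fpt hR ncA scA, k7]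
  have blkFbC : blk R (Fpt hR b C1) = {b, C1, d1} := by rw [blk_Fpt hR nCb sCb, k5]
  have blkFBc : blk R (Fpt hR B c1) = {B, c1, D1} := by rw [blk_Fpt hR ncB scB, k8]
  -- the point map
  set f : Fin 12 → Fin 12 :=
    ![P2 hR 0, P2 hR b, P2 hR c1, P2 hR d1, Fpt hR 0 b, Fpt hR A B, Fpt hR 0 B,
      Fpt hR b A, Fpt hR 0 C1, Fpt hR A c1, Fpt hR b C1, Fpt hR B c1] with hf
  have hfb : ∀ q : Fin 12, blk R (f q) = Finset.image g (blk0 q) := by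
    intro q
    have himg : ∀ (i j : Fin 8), Finset.image g {i, j} = {g i, g j} := by
      intro i j
      rw [Finset.image_insert, Finset.image_singleton]
    have himg3 : ∀ (i j l : Fin 8), Finset.image g {i, j, l} = {g i, g j, g l} := by
      intro i j l
      rw [Finset.image_insert, Finset.image_insert, Finset.image_singleton]
    fin_cases q
    · show blk R (P2 hR 0) = Finset.image g {0, 1}
      rw [blkP0, himg, g0, g1]
    · show blk R (P2 hR b) = Finset.image g {2, 3}
      rw [blkPb, himg, g2, g3]
    · show blk R (P2 hR c1) = Finset.image g {4, 5}
      rw [blkPc, himg, g4, g5]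
    · show blk R (P2 hR d1) = Finset.image g {6, 7}
      rw [blkPd, himg, g6, g7]
    · show blk R (Fpt hR 0 b) = Finset.image g {0, 2, 4}
      rw [blkF0b, himg3, g0, g2, g4]
    · show blk R (Fpt hR A B) = Finset.image g {1, 3, 5}
      rw [blkFAB, himg3, g1, g3, g5]
    · show blk R (Fpt hR 0 B) = Finset.image g {0, 3, 6}
      rw [blkF0B, himg3, g0, g3, g6]
    · show blk R (Fpt hR b A) = Finset.image g {1, 2, 7}
      rw [blkFbA, himg3, g1, g2, g7, Finset.insert_comm]
    · show blk R (Fpt hR 0 C1) = Finset.image g {0, 5, 7}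
      rw [blkF0C, himg3, g0, g5, g7]
    · show blk R (Fpt hR A c1) = Finset.image g {1, 4, 6}
      rw [blkFAc, himg3, g1, g4, g6]
    · show blk R (Fpt hR b C1) = Finset.image g {2, 5, 6}
      rw [blkFbC, himg3, g2, g5, g6]
    · show blk R (Fpt hR B c1) = Finset.image g {3, 4, 7}
      rw [blkFBc, himg3, g3, g4, g7]
  -- injectivity of f
  have blk0inj : Function.Injective blk0 := by decide
  have finj : Function.Injective f := by
    intro q q' h
    have hb' : Finset.image g (blk0 q) = Finset.image g (blk0 q') := by
      rw [← hfb, ← hfb, h]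
    exact blk0inj (Finset.image_injective ginj hb')
  have fbij : Function.Bijective f := Finite.injective_iff_bijective.mp finj
  refine ⟨Equiv.ofBijective g gbij, Equiv.ofBijective f fbij, ?_⟩
  intro c p
  show R0 c p ↔ R (g c) (f p)
  constructor
  · intro h
    have hm : g c ∈ Finset.image g (blk0 p) := Finset.mem_image_of_mem g h
    rw [← hfb] at hm
    exact (mem_blk R).mp hm
  · intro h
    have hm : g c ∈ blk R (f p) := (mem_blk R).mpr h
    rw [hfb] at hm
    obtain ⟨x, hx, hgx⟩ := Finset.mem_image.mp hm
    have := ginj hgx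
    rwa [← this]

theorem isSig_R0 : IsSig2438Structure R0 := by
  have inner : ∀ p : Fin 12,
      @Finset.filter (Fin 8) (fun c => R0 c p) (fun _ => Classical.propDecidable _)
        Finset.univ = Finset.univ.filter (fun c => R0 c p) :=
    fun p => @Finset.filter_congr _ _ _ (fun _ => Classical.propDecidable _) _ _
      (fun x _ => Iff.rfl)
  refine ⟨by unfold ExistsUnique; decide, ?_, ?_⟩ <;>
  · simp only [inner]
    decide

end Sig2438

/-- There exists an incidence structure with signature `[2^4 3^8]` on
8 curves and 12 points, and it is unique up to isomorphism (bijections of curves and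
points preserving incidence). -/
theorem sig2438_exists_unique :
    (∃ R : Fin 8 → Fin 12 → Prop, IsSig2438Structure R) ∧
    (∀ R R' : Fin 8 → Fin 12 → Prop, IsSig2438Structure R → IsSig2438Structure R' →
      ∃ (e : Fin 8 ≃ Fin 8) (f : Fin 12 ≃ Fin 12),
        ∀ c p, R c p ↔ R' (e c) (f p)) := by
  constructor
  · exact ⟨Sig2438.R0, Sig2438.isSig_R0⟩
  · intro R R' hR hR'
    obtain ⟨e1, f1, h1⟩ := Sig2438.iso0 hR
    obtain ⟨e2, f2, h2⟩ := Sig2438.iso0 hR'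
    refine ⟨e1.symm.trans e2, f1.symm.trans f2, ?_⟩
    intro c p
    have := (h1 (e1.symm c) (f1.symm p)).symm
    rw [e1.apply_symm_apply, f1.apply_symm_apply] at this
    rw [this, h2]
    rfl
end

section
/- The possible signatures [2^{n_2} 3^{n_3} …] satisfying Σ_{k≥2} n_k·C(k,2) = C(5,2) = 10, for which in addition n_k = 0 for k > 5 and the constraints of Lemma (largepoint) hold, are exactly: [5^1], [2^4 4^1], [2^4 3^2], [2^7 3^1], [2^{10}]; in particular the solutions [2^1 3^1 4^1] and [2^1 3^3] of the counting equation do not satisfy the constraints. -/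
/-- The constraint of Lemma (largepoint) for `ℓ = 5` lines, in the sharp form used in
the paper (not counting the contribution of the big point itself): if there is a
point of multiplicity `5 − c`, then `Σ_k n_k·C(k−1,2) ≤ C(c,2) + C((5−c)−1,2)`. -/
def LargepointConstraint5 (n : ℕ → ℕ) : Prop :=
  ∀ c ≤ 5, 1 ≤ n (5 - c) →
    (∑ k ∈ Finset.Icc 2 5, n k * Nat.choose (k - 1) 2)
      ≤ Nat.choose c 2 + Nat.choose (5 - c - 1) 2

/-!
The counting equation reads `n₂ + 3 n₃ + 6 n₄ + 10 n₅ = 10` and has seven solutions. The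
largepoint sum is `n₃ + 3 n₄ + 6 n₅`; at a quadruple point (`c = 1`) it must be at most `3`,
and at a triple point (`c = 2`) at most `2`. This rules out `[2 3 4]` (sum `4`) and `[2 3³]`
(sum `3`), and the five remaining signatures satisfy every instance of the constraint.
-/

open Finset Function

theorem eq_iff_eqOn_of_support_subset {α M : Type*} [Zero M] {f g : α → M} {s : Set α}
    (hf : support f ⊆ s) (hg : support g ⊆ s) : f = g ↔ Set.EqOn f g s := by
  refine ⟨fun h => h ▸ Set.eqOn_refl f s, fun h => funext fun a => ?_⟩
  by_cases ha : a ∈ s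
  · exact h ha
  · rw [notMem_support.1 (mt (@hf a) ha), notMem_support.1 (mt (@hg a) ha)]

theorem eq_of_support_subset_Icc_two_five {n m : ℕ → ℕ} (hn : support n ⊆ Set.Icc 2 5)
    (hm : support m ⊆ Set.Icc 2 5) (h : (n 2, n 3, n 4, n 5) = (m 2, m 3, m 4, m 5)) : n = m := by
  simp only [Prod.mk.injEq] at h
  refine (eq_iff_eqOn_of_support_subset hn hm).2 fun k ⟨hk2, hk5⟩ => ?_
  interval_cases k <;> tauto

theorem sum_mul_choose_two_Icc_two_five (n : ℕ → ℕ) :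
    ∑ k ∈ Icc 2 5, n k * k.choose 2 = n 2 + 3 * n 3 + 6 * n 4 + 10 * n 5 := by
  simp [sum_Icc_succ_top, Nat.choose, mul_comm]

theorem sum_mul_choose_pred_two_Icc_two_five (n : ℕ → ℕ) :
    ∑ k ∈ Icc 2 5, n k * (k - 1).choose 2 = n 3 + 3 * n 4 + 6 * n 5 := by
  simp [sum_Icc_succ_top, Nat.choose, mul_comm]

theorem LargepointConstraint5.le_three_of_quadruple_point {n : ℕ → ℕ}
    (h : LargepointConstraint5 n) (h4 : n 4 ≠ 0) : n 3 + 3 * n 4 + 6 * n 5 ≤ 3 := by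
  simpa [sum_mul_choose_pred_two_Icc_two_five] using
    h 1 (by norm_num) (Nat.one_le_iff_ne_zero.2 h4)

theorem LargepointConstraint5.le_two_of_triple_point {n : ℕ → ℕ}
    (h : LargepointConstraint5 n) (h3 : n 3 ≠ 0) : n 3 + 3 * n 4 + 6 * n 5 ≤ 2 := by
  simpa [sum_mul_choose_pred_two_Icc_two_five] using
    h 2 (by norm_num) (Nat.one_le_iff_ne_zero.2 h3)

theorem counting_equation_solutions {a b c d : ℕ} (h : a + 3 * b + 6 * c + 10 * d = 10) :
    (a, b, c, d) ∈ ({(0, 0, 0, 1), (4, 0, 1, 0), (1, 1, 1, 0), (4, 2, 0, 0), (1, 3, 0, 0),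
      (7, 1, 0, 0), (10, 0, 0, 0)} : Finset (ℕ × ℕ × ℕ × ℕ)) := by
  have : d ≤ 1 := by omega
  have : c ≤ 1 := by omega
  have : b ≤ 3 := by omega
  obtain rfl : a = 10 - 3 * b - 6 * c - 10 * d := by omega
  interval_cases d <;> interval_cases c <;> interval_cases b <;> first | decide | omega

theorem LargepointConstraint5.mem_of_counting_equation {n : ℕ → ℕ}
    (h : LargepointConstraint5 n) (hsum : ∑ k ∈ Icc 2 5, n k * k.choose 2 = Nat.choose 5 2) :
    (n 2, n 3, n 4, n 5) ∈ ({(0, 0, 0, 1), (4, 0, 1, 0), (4, 2, 0, 0), (7, 1, 0, 0),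
      (10, 0, 0, 0)} : Finset (ℕ × ℕ × ℕ × ℕ)) := by
  rw [sum_mul_choose_two_Icc_two_five] at hsum
  have h4 := h.le_three_of_quadruple_point
  have h3 := h.le_two_of_triple_point
  have hsol := counting_equation_solutions hsum
  simp only [mem_insert, mem_singleton, Prod.mk.injEq] at hsol ⊢
  rcases hsol with hsol | hsol | hsol | hsol | hsol | hsol | hsol <;> omega

/-- The signatures `[2^{n₂} 3^{n₃} …]` with `Σ_{k≥2} n_k·C(k,2) = C(5,2) = 10`,
`n_k = 0` outside `2 ≤ k ≤ 5`, satisfying the constraints of Lemma (largepoint), are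
exactly `[5^1]`, `[2^4 4^1]`, `[2^4 3^2]`, `[2^7 3^1]`, `[2^{10}]`; in particular the
solutions `[2^1 3^1 4^1]` and `[2^1 3^3]` of the counting equation fail the constraints. -/
theorem signatures_five_lines :
    (∀ n : ℕ → ℕ,
      ((∀ k, n k ≠ 0 → 2 ≤ k ∧ k ≤ 5) ∧
        (∑ k ∈ Finset.Icc 2 5, n k * Nat.choose k 2) = Nat.choose 5 2 ∧
        LargepointConstraint5 n)
      ↔ (n = (fun k => if k = 5 then 1 else 0) ∨
          n = (fun k => if k = 2 then 4 else if k = 4 then 1 else 0) ∨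
          n = (fun k => if k = 2 then 4 else if k = 3 then 2 else 0) ∨
          n = (fun k => if k = 2 then 7 else if k = 3 then 1 else 0) ∨
          n = (fun k => if k = 2 then 10 else 0))) ∧
    ¬ LargepointConstraint5 (fun k => if k = 2 then 1 else if k = 3 then 1 else if k = 4 then 1 else 0) ∧
    ¬ LargepointConstraint5 (fun k => if k = 2 then 1 else if k = 3 then 3 else 0) := by
  refine ⟨fun n => ⟨fun ⟨hsupp, hsum, h⟩ => ?_, ?_⟩,
    fun h => absurd (h.le_three_of_quadruple_point one_ne_zero) (by decide),
    fun h => absurd (h.le_two_of_triple_point three_ne_zero) (by decide)⟩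
  · have hsig := h.mem_of_counting_equation hsum
    simp only [mem_insert, mem_singleton] at hsig
    rcases hsig with hsig | hsig | hsig | hsig | hsig <;>
      [left; (right; left); (right; right; left); (right; right; right; left);
        (right; right; right; right)] <;>
      exact eq_of_support_subset_Icc_two_five hsupp (fun k hk => by
        simp only [mem_support, Set.mem_Icc] at hk ⊢
        split_ifs at hk <;> omega) hsig
  · rintro (rfl | rfl | rfl | rfl | rfl) <;>
      refine ⟨fun k hk => ?_, by decide, by unfold LargepointConstraint5; decide⟩ <;>
      dsimp only at hk <;> split_ifs at hk <;> omega
end
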